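/- arXiv:1410.8226 — 11 statements merged into one kernel-verified Lean document; each statement's English description precedes it below -/
import Mathlib

section
/- Let β ∈ [0,1) and let u ∈ ℝ^n satisfy u_j > 0 for all j, ∑_{j=1}^n u_j = n, and ‖u − e‖_∞ ≤ β. Then ((1−3β)/(2(1−β)n))·‖u − e‖₂² ≤ δ(u) ≤ (1/n)·‖u − e‖₂². -/
/-!
Since `∑ j, (u j - 1) = 0`, `n · δ(u) = ∑ j, (u j ln u j - (u j - 1))`, and both bounds hold termwise.
The upper bound is `ln x ≤ x - 1`. For the lower bound, `ln x ≥ 2(x - 1)/(x + 1)` when `x ≥ 1` and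
`ln x ≥ (x - x⁻¹)/2` when `x ≤ 1` (that is, `sinh t ≤ t` for `t ≤ 0`) give
`x ln x - (x - 1) ≥ (x - 1)² / (2 + |x - 1|)`, and `(1 - 3β)/(2(1 - β)) ≤ 1/(2 + β)`.
-/

/-- The entropy proximity measure `δ(u) = (1/n) ∑ u_j ln u_j`. -/
noncomputable def entropyDelta (n : ℕ) (u : Fin n → ℝ) : ℝ :=
  (1 / (n : ℝ)) * ∑ j, u j * Real.log (u j)

open Finset Real

namespace Real

lemma sub_inv_div_two_le_log {x : ℝ} (hx0 : 0 < x) (hx1 : x ≤ 1) : (x - x⁻¹) / 2 ≤ log x := by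
  rw [← sinh_log hx0]
  exact sinh_le_self_iff.mpr (log_nonpos hx0.le hx1)

lemma mul_log_sub_le_sq {x : ℝ} (hx : 0 < x) : x * log x - (x - 1) ≤ (x - 1) ^ 2 := by
  nlinarith [mul_le_mul_of_nonneg_left (log_le_sub_one_of_pos hx) hx.le]

lemma sq_div_two_add_abs_le_mul_log_sub {x : ℝ} (hx : 0 < x) :
    (x - 1) ^ 2 / (2 + |x - 1|) ≤ x * log x - (x - 1) := by
  rcases le_total x 1 with hx1 | hx1
  · have hlog : x * ((x - x⁻¹) / 2) ≤ x * log x :=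
      mul_le_mul_of_nonneg_left (sub_inv_div_two_le_log hx hx1) hx.le
    have hsq : x * ((x - x⁻¹) / 2) - (x - 1) = (x - 1) ^ 2 / 2 := by
      field_simp
      ring
    calc (x - 1) ^ 2 / (2 + |x - 1|) ≤ (x - 1) ^ 2 / 2 := by
          gcongr
          exact le_add_of_nonneg_right (abs_nonneg _)
      _ ≤ x * log x - (x - 1) := by linarith
  · have hlog : x * (2 * (x - 1) / (x - 1 + 2)) ≤ x * log x := by
      gcongr
      simpa using le_log_one_add_of_nonneg (sub_nonneg.mpr hx1)
    have hsq : x * (2 * (x - 1) / (x - 1 + 2)) - (x - 1) = (x - 1) ^ 2 / (2 + |x - 1|) := by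
      rw [abs_of_nonneg (sub_nonneg.mpr hx1)]
      field_simp
      ring
    linarith

lemma mul_sq_le_mul_log_sub_of_abs_sub_one_le {x β : ℝ} (hx : 0 < x) (hxβ : |x - 1| ≤ β)
    (hβ : β < 1) : (1 - 3 * β) / (2 * (1 - β)) * (x - 1) ^ 2 ≤ x * log x - (x - 1) := by
  have hβ0 : 0 ≤ β := (abs_nonneg _).trans hxβ
  have hconst : (1 - 3 * β) / (2 * (1 - β)) ≤ 1 / (2 + |x - 1|) :=
    calc (1 - 3 * β) / (2 * (1 - β)) ≤ 1 / (2 + β) := by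
          rw [div_le_div_iff₀ (by linarith) (by linarith)]
          nlinarith
      _ ≤ 1 / (2 + |x - 1|) := by gcongr
  calc (1 - 3 * β) / (2 * (1 - β)) * (x - 1) ^ 2 ≤ 1 / (2 + |x - 1|) * (x - 1) ^ 2 := by
        gcongr
    _ = (x - 1) ^ 2 / (2 + |x - 1|) := one_div_mul_eq_div _ _
    _ ≤ x * log x - (x - 1) := sq_div_two_add_abs_le_mul_log_sub hx

end Real

lemma Finset.sum_mul_log_eq_sum_mul_log_sub {ι : Type*} (s : Finset ι) (u : ι → ℝ)
    (hsum : ∑ j ∈ s, u j = #s) :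
    ∑ j ∈ s, u j * log (u j) = ∑ j ∈ s, (u j * log (u j) - (u j - 1)) := by
  simp [sum_sub_distrib, hsum]

theorem stmt_2_general (n : ℕ) (β : ℝ) (hβ1 : β < 1)
    (u : Fin n → ℝ) (hu : ∀ j, 0 < u j) (hsum : ∑ j, u j = (n : ℝ))
    (hinf : ∀ j, |u j - 1| ≤ β) :
    (1 - 3 * β) / (2 * (1 - β) * n) * ∑ j, (u j - 1) ^ 2 ≤ entropyDelta n u ∧
      entropyDelta n u ≤ (1 / (n : ℝ)) * ∑ j, (u j - 1) ^ 2 := by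
  have hsum' : ∑ j, u j = (#(univ : Finset (Fin n)) : ℝ) := by simpa using hsum
  unfold entropyDelta
  rw [sum_mul_log_eq_sum_mul_log_sub _ _ hsum']
  constructor
  · calc (1 - 3 * β) / (2 * (1 - β) * n) * ∑ j, (u j - 1) ^ 2
        = 1 / n * ∑ j, (1 - 3 * β) / (2 * (1 - β)) * (u j - 1) ^ 2 := by
          rw [← mul_sum, ← mul_assoc, one_div_mul_eq_div, div_div]
      _ ≤ 1 / n * ∑ j, (u j * log (u j) - (u j - 1)) := by
          gcongr with j
          exact mul_sq_le_mul_log_sub_of_abs_sub_one_le (hu j) (hinf j) hβ1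
  · gcongr with j
    exact mul_log_sub_le_sq (hu j)

theorem stmt_2 (n : ℕ) (hn : 1 ≤ n) (β : ℝ) (hβ0 : 0 ≤ β) (hβ1 : β < 1)
    (u : Fin n → ℝ) (hu : ∀ j, 0 < u j) (hsum : ∑ j, u j = (n : ℝ))
    (hinf : ∀ j, |u j - 1| ≤ β) :
    (1 - 3 * β) / (2 * (1 - β) * n) * ∑ j, (u j - 1) ^ 2 ≤ entropyDelta n u ∧
      entropyDelta n u ≤ (1 / (n : ℝ)) * ∑ j, (u j - 1) ^ 2 :=
  stmt_2_general n β hβ1 u hu hsum hinf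
end

section
/- Let u ∈ ℝ^n satisfy u_j > 0 for all j and ∑_{j=1}^n u_j = n. If ‖u − e‖_∞ ≤ 1/4 then δ(u) ≥ (1/(6n))·‖u − e‖₂²; if ‖u − e‖_∞ ≤ 1/10 then δ(u) ≥ (7/(18n))·‖u − e‖₂². -/
/-!
On `(0, b]` the function `f(x) = x log x - (x - 1) - (x - 1)² / (2b)` has `f'' = 1/x - 1/b ≥ 0`,
so it is convex; as `f(1) = f'(1) = 0`, it is nonnegative there as soon as `1 ≤ b`. Summing
`(u_j - 1)² / (2b) ≤ u_j log u_j - (u_j - 1)` over `j` and using `∑ (u_j - 1) = 0` bounds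
`n δ(u)` below by `‖u - e‖₂² / (2b)`. Both claims follow with `b = 9/7`, since `(2b)⁻¹ = 7/18`.
-/

open Real Set

theorem ConvexOn.isMinOn_of_hasDerivAt_eq_zero {S : Set ℝ} {f : ℝ → ℝ} {x : ℝ}
    (hf : ConvexOn ℝ S f) (hx : x ∈ S) (hf' : HasDerivAt f 0 x) : IsMinOn f S x := by
  intro y hy
  change f x ≤ f y
  rcases lt_trichotomy x y with hxy | rfl | hyx
  · have h := hf.le_slope_of_hasDerivAt hx hy hxy hf'
    rw [slope_def_field, le_div_iff₀ (sub_pos.2 hxy)] at h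
    simpa using h
  · exact le_rfl
  · have h := hf.slope_le_of_hasDerivAt hy hx hyx hf'
    rw [slope_def_field, div_le_iff₀ (sub_pos.2 hyx)] at h
    simpa using h

theorem sq_sub_one_div_le_mul_log_sub {b x : ℝ} (hb : 1 ≤ b) (hx : 0 < x) (hxb : x ≤ b) :
    (x - 1) ^ 2 / (2 * b) ≤ x * log x - (x - 1) := by
  set f : ℝ → ℝ := fun y ↦ y * log y - (y - 1) - (y - 1) ^ 2 / (2 * b)
  have hf' : ∀ y ≠ 0, HasDerivAt f (log y - (y - 1) / b) y := fun y hy ↦ by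
    have hsq := (((hasDerivAt_id' y).sub_const 1).pow 2).div_const (2 * b)
    refine ((((hasDerivAt_id' y).mul (hasDerivAt_log hy)).sub
      ((hasDerivAt_id' y).sub_const 1)).sub hsq).congr_deriv ?_
    field_simp
    ring
  have hf'' : ∀ y ≠ 0, HasDerivAt (fun y ↦ log y - (y - 1) / b) (y⁻¹ - 1 / b) y := fun y hy ↦
    (hasDerivAt_log hy).sub (((hasDerivAt_id y).sub_const 1).div_const b)
  have hconv : ConvexOn ℝ (Ioc 0 b) f := by
    refine convexOn_of_hasDerivWithinAt2_nonneg (f' := fun y ↦ log y - (y - 1) / b)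
      (f'' := fun y ↦ y⁻¹ - 1 / b) (convex_Ioc 0 b)
      (fun y hy ↦ (hf' y hy.1.ne').continuousAt.continuousWithinAt)
      ?_ ?_ ?_ <;> rw [interior_Ioc]
    · exact fun y hy ↦ (hf' y hy.1.ne').hasDerivWithinAt
    · exact fun y hy ↦ (hf'' y hy.1.ne').hasDerivWithinAt
    · exact fun y hy ↦ sub_nonneg.2 (one_div b ▸ inv_anti₀ hy.1 hy.2.le)
  have hmin : f 1 ≤ f x := hconv.isMinOn_of_hasDerivAt_eq_zero ⟨one_pos, hb⟩
    (by simpa using hf' 1 one_ne_zero) ⟨hx, hxb⟩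
  norm_num [f] at hmin
  linarith

theorem sum_sq_sub_one_div_le_sum_mul_log {ι : Type*} [Fintype ι] {u : ι → ℝ} {b : ℝ}
    (hb : 1 ≤ b) (hu : ∀ j, 0 < u j) (hub : ∀ j, u j ≤ b) (hsum : ∑ j, u j = Fintype.card ι) :
    (∑ j, (u j - 1) ^ 2) / (2 * b) ≤ ∑ j, u j * log (u j) := by
  have hsum' : ∑ j, (u j - 1) = 0 := by simp [Finset.sum_sub_distrib, hsum]
  calc (∑ j, (u j - 1) ^ 2) / (2 * b) = ∑ j, (u j - 1) ^ 2 / (2 * b) := Finset.sum_div ..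
    _ ≤ ∑ j, (u j * log (u j) - (u j - 1)) :=
      Finset.sum_le_sum fun j _ ↦ sq_sub_one_div_le_mul_log_sub hb (hu j) (hub j)
    _ = ∑ j, u j * log (u j) := by rw [Finset.sum_sub_distrib, hsum', sub_zero]

theorem stmt_3_general (n : ℕ) (u : Fin n → ℝ)
    (hu : ∀ j, 0 < u j) (hsum : ∑ j, u j = (n : ℝ)) :
    ((∀ j, |u j - 1| ≤ 1 / 4) →
      (1 / (6 * (n : ℝ))) * ∑ j, (u j - 1) ^ 2 ≤ entropyDelta n u) ∧
    ((∀ j, |u j - 1| ≤ 1 / 10) →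
      (7 / (18 * (n : ℝ))) * ∑ j, (u j - 1) ^ 2 ≤ entropyDelta n u) := by
  suffices h : (∀ j, |u j - 1| ≤ 1 / 4) →
      (7 / (18 * (n : ℝ))) * ∑ j, (u j - 1) ^ 2 ≤ entropyDelta n u by
    refine ⟨fun h4 ↦ le_trans ?_ (h h4), fun h10 ↦ h fun j ↦ (h10 j).trans (by norm_num)⟩
    have hS : 0 ≤ (n : ℝ)⁻¹ * ∑ j, (u j - 1) ^ 2 := by positivity
    linarith [show 7 / (18 * (n : ℝ)) * ∑ j, (u j - 1) ^ 2 - 1 / (6 * n) * ∑ j, (u j - 1) ^ 2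
      = 2 / 9 * ((n : ℝ)⁻¹ * ∑ j, (u j - 1) ^ 2) by ring]
  intro h4
  have hub : ∀ j, u j ≤ 9 / 7 := fun j ↦ by linarith [(abs_le.1 (h4 j)).2]
  have key := sum_sq_sub_one_div_le_sum_mul_log (by norm_num) hu hub (by simpa using hsum)
  calc 7 / (18 * (n : ℝ)) * ∑ j, (u j - 1) ^ 2
      = 1 / n * ((∑ j, (u j - 1) ^ 2) / (2 * (9 / 7))) := by ring
    _ ≤ entropyDelta n u := by rw [entropyDelta]; gcongr

theorem stmt_3 (n : ℕ) (hn : 1 ≤ n) (u : Fin n → ℝ)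
    (hu : ∀ j, 0 < u j) (hsum : ∑ j, u j = (n : ℝ)) :
    ((∀ j, |u j - 1| ≤ 1 / 4) →
      (1 / (6 * (n : ℝ))) * ∑ j, (u j - 1) ^ 2 ≤ entropyDelta n u) ∧
    ((∀ j, |u j - 1| ≤ 1 / 10) →
      (7 / (18 * (n : ℝ))) * ∑ j, (u j - 1) ^ 2 ≤ entropyDelta n u) :=
  stmt_3_general n u hu hsum
end

section
/- Let β ∈ [0,1/2), μ > 0, and let u ∈ ℝ^n satisfy u_j > 0 for all j, ∑_{j=1}^n u_j = n, and ‖u − e‖_∞ ≤ β. Define v_j := √(μ u_j) and w_j := −v_j + δ(u) v_j − v_j ln(u_j) for each j. Then for every j: (δ(u) − 2 − β²/(4β² − 6β + 2))·v_j + μ/v_j ≤ w_j ≤ (δ(u) − 2)·v_j + μ/v_j. -/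
set_option maxHeartbeats 1000000 in
/-- Key scalar estimate: if `|a - 1| ≤ β < 1/2` then
`1/a - 1 + log a ≤ β² / (4β² - 6β + 2)`. -/
lemma key_upper (β a : ℝ) (hβ0 : 0 ≤ β) (hβ1 : β < 1 / 2) (ha : 0 < a)
    (h : |a - 1| ≤ β) : 1 / a - 1 + Real.log a ≤ β ^ 2 / (4 * β ^ 2 - 6 * β + 2) := by
  obtain ⟨x, rfl⟩ : ∃ x, a = 1 - x := ⟨1 - a, by ring⟩
  have hxb : |x| ≤ β := by rwa [show (1 - x) - 1 = -x by ring, abs_neg] at h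
  have hx1 : |x| < 1 := lt_of_le_of_lt hxb (by linarith)
  have hxlt : |x| < 1 / 2 := lt_of_le_of_lt hxb hβ1
  have hs0 : 0 ≤ |x| := abs_nonneg x
  have hxle : x ≤ |x| := le_abs_self x
  have hxge : -x ≤ |x| := neg_le_abs x
  have h1s : 0 < 1 - |x| := by linarith
  have h1β : (0:ℝ) < 1 - β := by linarith
  have h12β : (0:ℝ) < 1 - 2 * β := by linarith
  have hD : (0:ℝ) < 4 * β ^ 2 - 6 * β + 2 := by nlinarith
  have hane : (1 : ℝ) - x ≠ 0 := ne_of_gt ha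
  -- Taylor estimate for log(1-x) with 3 terms
  have htaylor := Real.abs_log_sub_add_sum_range_le hx1 3
  have hsum : (∑ i ∈ Finset.range 3, x ^ (i + 1) / ((i : ℝ) + 1))
      = x + x ^ 2 / 2 + x ^ 3 / 3 := by
    simp [Finset.sum_range_succ]
    norm_num
  rw [hsum] at htaylor
  have hlog : Real.log (1 - x) ≤ -x - x ^ 2 / 2 - x ^ 3 / 3 + |x| ^ 4 / (1 - |x|) := by
    have h2 := (abs_le.mp htaylor).2
    have : |x| ^ (3 + 1) = |x| ^ 4 := by norm_num
    rw [this] at h2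
    linarith
  -- 1/(1-x) - 1 - x = x^2/(1-x)
  have hsplit : 1 / (1 - x) - 1 - x = x ^ 2 / (1 - x) := by
    field_simp
    ring
  -- stepwise bounds, s := |x|
  have hx2 : x ^ 2 = |x| ^ 2 := (sq_abs x).symm
  have hsβ2 : |x| ^ 2 ≤ β ^ 2 := by nlinarith
  -- bound 1: x^2/(1-x) ≤ |x|^2 / (1 - β)
  have hb1 : x ^ 2 / (1 - x) ≤ |x| ^ 2 / (1 - β) := by
    rw [hx2]
    apply div_le_div_of_nonneg_left (sq_nonneg _) h1β
    linarith
  -- bound 2: -x^3/3 ≤ |x|^2 * β / 3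
  have hb2 : -(x ^ 3) / 3 ≤ |x| ^ 2 * β / 3 := by
    have h3 : -(x ^ 3) ≤ |x| ^ 3 := by
      have : |x ^ 3| = |x| ^ 3 := abs_pow x 3
      nlinarith [neg_abs_le (x ^ 3)]
    have h4 : |x| ^ 3 ≤ |x| ^ 2 * β := by nlinarith
    linarith
  -- bound 3: |x|^4/(1-|x|) ≤ |x|^2 * (2 * β^2)
  have hb3 : |x| ^ 4 / (1 - |x|) ≤ |x| ^ 2 * (2 * β ^ 2) := by
    rw [div_le_iff₀ h1s]
    have t1 : |x| ^ 2 * |x| ^ 2 ≤ |x| ^ 2 * β ^ 2 :=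
      mul_le_mul_of_nonneg_left hsβ2 (sq_nonneg _)
    have t2 : β ^ 2 ≤ 2 * β ^ 2 * (1 - |x|) := by
      nlinarith [mul_nonneg (sq_nonneg β) (show (0:ℝ) ≤ 1 - 2 * |x| by linarith)]
    have t3 : |x| ^ 2 * β ^ 2 ≤ |x| ^ 2 * (2 * β ^ 2 * (1 - |x|)) :=
      mul_le_mul_of_nonneg_left t2 (sq_nonneg _)
    have h5 : |x| ^ 4 = |x| ^ 2 * |x| ^ 2 := by ring
    have h7 : |x| ^ 2 * (2 * β ^ 2 * (1 - |x|)) = |x| ^ 2 * (2 * β ^ 2) * (1 - |x|) := by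
      ring
    linarith [t1, t3]
  -- combine: LHS ≤ |x|^2 * C with C = 1/(1-β) - 1/2 + β/3 + 2β^2
  have hC0 : (0:ℝ) ≤ 1 / (1 - β) - 1 / 2 + β / 3 + 2 * β ^ 2 := by
    have h6 : (1:ℝ) ≤ 1 / (1 - β) := by
      rw [le_div_iff₀ h1β]; linarith
    linarith [sq_nonneg β]
  have hcomb : 1 / (1 - x) - 1 + Real.log (1 - x)
      ≤ |x| ^ 2 * (1 / (1 - β) - 1 / 2 + β / 3 + 2 * β ^ 2) := by
    have e1 : 1 / (1 - x) - 1 + Real.log (1 - x)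
        ≤ x ^ 2 / (1 - x) - x ^ 2 / 2 + (-(x ^ 3) / 3) + |x| ^ 4 / (1 - |x|) := by
      linarith [hlog, hsplit]
    have e2 : x ^ 2 / (1 - x) - x ^ 2 / 2 + (-(x ^ 3) / 3) + |x| ^ 4 / (1 - |x|)
        ≤ |x| ^ 2 / (1 - β) - |x| ^ 2 / 2 + |x| ^ 2 * β / 3 + |x| ^ 2 * (2 * β ^ 2) := by
      rw [hx2] at hb1 ⊢
      linarith [hb2, hb3]
    have e3 : |x| ^ 2 / (1 - β) - |x| ^ 2 / 2 + |x| ^ 2 * β / 3 + |x| ^ 2 * (2 * β ^ 2)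
        = |x| ^ 2 * (1 / (1 - β) - 1 / 2 + β / 3 + 2 * β ^ 2) := by ring
    linarith
  -- final polynomial estimate: β^2 * C ≤ β^2 / D
  have hstep : (1 / (1 - β) - 1 / 2 + β / 3 + 2 * β ^ 2) * (4 * β ^ 2 - 6 * β + 2) ≤ 1 := by
    have hDval : (1 / (1 - β)) * (4 * β ^ 2 - 6 * β + 2) = 2 * (1 - 2 * β) := by
      field_simp
      ring
    have expand : (1 / (1 - β) - 1 / 2 + β / 3 + 2 * β ^ 2) * (4 * β ^ 2 - 6 * β + 2)
        = (1 / (1 - β)) * (4 * β ^ 2 - 6 * β + 2)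
          + (-(1:ℝ) / 2 + β / 3 + 2 * β ^ 2) * (4 * β ^ 2 - 6 * β + 2) := by ring
    rw [expand, hDval]
    nlinarith [mul_nonneg (mul_nonneg (mul_nonneg hβ0 hβ0) hβ0) hβ0,
      mul_nonneg (mul_nonneg hβ0 hβ0) hβ0]
  have hfin : |x| ^ 2 * (1 / (1 - β) - 1 / 2 + β / 3 + 2 * β ^ 2)
      ≤ β ^ 2 / (4 * β ^ 2 - 6 * β + 2) := by
    rw [le_div_iff₀ hD]
    calc |x| ^ 2 * (1 / (1 - β) - 1 / 2 + β / 3 + 2 * β ^ 2) * (4 * β ^ 2 - 6 * β + 2)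
        ≤ β ^ 2 * (1 / (1 - β) - 1 / 2 + β / 3 + 2 * β ^ 2) * (4 * β ^ 2 - 6 * β + 2) := by
          apply mul_le_mul_of_nonneg_right _ hD.le
          exact mul_le_mul_of_nonneg_right hsβ2 hC0
      _ = β ^ 2 * ((1 / (1 - β) - 1 / 2 + β / 3 + 2 * β ^ 2) * (4 * β ^ 2 - 6 * β + 2)) := by
          ring
      _ ≤ β ^ 2 * 1 := mul_le_mul_of_nonneg_left hstep (sq_nonneg β)
      _ = β ^ 2 := by ring
  linarith

set_option maxHeartbeats 1000000 in
theorem stmt_4 (n : ℕ) (hn : 1 ≤ n) (β μ : ℝ) (hβ0 : 0 ≤ β) (hβ1 : β < 1 / 2)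
    (hμ : 0 < μ) (u : Fin n → ℝ) (hu : ∀ j, 0 < u j) (hsum : ∑ j, u j = (n : ℝ))
    (hinf : ∀ j, |u j - 1| ≤ β)
    (v w : Fin n → ℝ)
    (hv : ∀ j, v j = Real.sqrt (μ * u j))
    (hw : ∀ j, w j = -v j + entropyDelta n u * v j - v j * Real.log (u j)) :
    ∀ j, (entropyDelta n u - 2 - β ^ 2 / (4 * β ^ 2 - 6 * β + 2)) * v j + μ / v j ≤ w j ∧
      w j ≤ (entropyDelta n u - 2) * v j + μ / v j := by
  intro j
  have ha : 0 < u j := hu j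
  have hvpos : 0 < v j := by
    rw [hv j]; exact Real.sqrt_pos.mpr (mul_pos hμ ha)
  have hvsq : v j ^ 2 = μ * u j := by
    rw [hv j]; exact Real.sq_sqrt (mul_pos hμ ha).le
  have hμv : μ / v j = v j / u j := by
    rw [div_eq_div_iff (ne_of_gt hvpos) (ne_of_gt ha)]
    nlinarith [hvsq]
  have hlower : 1 - 1 / u j ≤ Real.log (u j) := by
    have h0 := Real.log_le_sub_one_of_pos (show (0:ℝ) < 1 / u j by positivity)
    rw [Real.log_div one_ne_zero (ne_of_gt ha), Real.log_one] at h0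
    linarith
  have hupper := key_upper β (u j) hβ0 hβ1 ha (hinf j)
  constructor
  · rw [hw j, hμv]
    have h2 : (entropyDelta n u - 2 - β ^ 2 / (4 * β ^ 2 - 6 * β + 2)) * v j + v j / u j
        - (-v j + entropyDelta n u * v j - v j * Real.log (u j))
        = -(v j * (β ^ 2 / (4 * β ^ 2 - 6 * β + 2)
            - (1 / u j - 1 + Real.log (u j)))) := by
      ring
    have h3 : 0 ≤ v j * (β ^ 2 / (4 * β ^ 2 - 6 * β + 2)
        - (1 / u j - 1 + Real.log (u j))) :=
      mul_nonneg hvpos.le (by linarith)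
    linarith
  · rw [hw j, hμv]
    have h2 : (entropyDelta n u - 2) * v j + v j / u j
        - (-v j + entropyDelta n u * v j - v j * Real.log (u j))
        = v j * (Real.log (u j) - (1 - 1 / u j)) := by
      ring
    have h3 : 0 ≤ v j * (Real.log (u j) - (1 - 1 / u j)) :=
      mul_nonneg hvpos.le (by linarith)
    linarith
end

section
/- Let β ∈ [0,1/4] and let u ∈ ℝ^n satisfy ∑_{j=1}^n u_j = n and 1−β ≤ u_j ≤ 1+β for all j. Then (3(1−β) + 2(1−β)ln(1−β))·n·δ(u) ≤ Δ21(u) ≤ (3(1+β) + 2(1+β)ln(1+β))·n·δ(u). -/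
/-- `Δ21(u) = ∑ u_j² ln u_j`. -/
noncomputable def Delta21 (n : ℕ) (u : Fin n → ℝ) : ℝ :=
  ∑ j, (u j) ^ 2 * Real.log (u j)

/-! For fixed `c`, the function `ψ x = x ^ 2 * log x - c * (x * log x)` has `ψ 1 = 0`,
`ψ' 1 = 1 - c` and `ψ'' x = (x * (3 + 2 * log x) - c) / x`. Since `x * (3 + 2 * log x)` is
increasing wherever `3 + 2 * log x ≥ 0`, `ψ` is convex on `[1 - β, 1 + β]` for
`c = (1 - β) * (3 + 2 * log (1 - β))` and concave there for
`c = (1 + β) * (3 + 2 * log (1 + β))`.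
Comparing `ψ` with its tangent at `1` bounds `u_j ^ 2 * log u_j` by
`c * (u_j * log u_j) + (1 - c) * (u_j - 1)` from either side, and summing over `j` kills the
linear terms because `∑ (u_j - 1) = 0`. -/

open Real Set

lemma ConvexOn.add_mul_sub_le_of_hasDerivAt {S : Set ℝ} {f : ℝ → ℝ} {f' x y : ℝ}
    (hf : ConvexOn ℝ S f) (hx : x ∈ S) (hy : y ∈ S) (hd : HasDerivAt f f' x) :
    f x + f' * (y - x) ≤ f y := by
  rcases lt_trichotomy x y with hxy | rfl | hyx
  · have := hf.le_slope_of_hasDerivAt hx hy hxy hd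
    rw [slope_def_field, le_div_iff₀ (sub_pos.2 hxy)] at this
    linarith
  · simp
  · have := hf.slope_le_of_hasDerivAt hy hx hyx hd
    rw [slope_def_field, div_le_iff₀ (sub_pos.2 hyx)] at this
    linarith

lemma ConcaveOn.le_add_mul_sub_of_hasDerivAt {S : Set ℝ} {f : ℝ → ℝ} {f' x y : ℝ}
    (hf : ConcaveOn ℝ S f) (hx : x ∈ S) (hy : y ∈ S) (hd : HasDerivAt f f' x) :
    f y ≤ f x + f' * (y - x) := by
  have := hf.neg.add_mul_sub_le_of_hasDerivAt hx hy hd.neg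
  simp only [Pi.neg_apply] at this
  linarith

lemma hasDerivAt_sq_mul_log {x : ℝ} (hx : x ≠ 0) :
    HasDerivAt (fun x ↦ x ^ 2 * log x) (2 * (x * log x) + x) x :=
  ((hasDerivAt_pow 2 x).mul (hasDerivAt_log hx)).congr_deriv (by field_simp; ring)

lemma hasDerivAt_two_mul_mul_log_add_self {x : ℝ} (hx : x ≠ 0) :
    HasDerivAt (fun x ↦ 2 * (x * log x) + x) (2 * log x + 3) x :=
  (((hasDerivAt_mul_log hx).const_mul 2).add (hasDerivAt_id' x)).congr_deriv (by ring)

section SecondDerivative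

variable {c q p : ℝ}

lemma hasDerivAt_sq_mul_log_sub_mul_mul_log (c : ℝ) {x : ℝ} (hx : x ≠ 0) :
    HasDerivAt (fun x ↦ x ^ 2 * log x - c * (x * log x))
      (2 * (x * log x) + x - c * (log x + 1)) x :=
  (hasDerivAt_sq_mul_log hx).sub ((hasDerivAt_mul_log hx).const_mul c)

lemma hasDerivAt_deriv_sq_mul_log_sub_mul_mul_log (c : ℝ) {x : ℝ} (hx : x ≠ 0) :
    HasDerivAt (fun x ↦ 2 * (x * log x) + x - c * (log x + 1))
      ((x * (3 + 2 * log x) - c) / x) x :=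
  ((hasDerivAt_two_mul_mul_log_add_self hx).sub
    (((hasDerivAt_log hx).add_const 1).const_mul c)).congr_deriv (by field_simp; ring)

lemma convexOn_sq_mul_log_sub_mul_mul_log (hq : 0 < q)
    (hc : ∀ y ∈ Ioo q p, c ≤ y * (3 + 2 * log y)) :
    ConvexOn ℝ (Icc q p) (fun x ↦ x ^ 2 * log x - c * (x * log x)) := by
  have hne : ∀ y ∈ Icc q p, y ≠ 0 := fun y hy ↦ (hq.trans_le hy.1).ne'
  refine convexOn_of_hasDerivWithinAt2_nonneg (convex_Icc q p)
    (f' := fun x ↦ 2 * (x * log x) + x - c * (log x + 1))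
    (f'' := fun x ↦ (x * (3 + 2 * log x) - c) / x)
    (fun y hy ↦
      (hasDerivAt_sq_mul_log_sub_mul_mul_log c (hne y hy)).continuousAt.continuousWithinAt)
    (fun y hy ↦ ?_) (fun y hy ↦ ?_) (fun y hy ↦ ?_) <;> rw [interior_Icc] at hy
  · exact (hasDerivAt_sq_mul_log_sub_mul_mul_log c
      (hne y (Ioo_subset_Icc_self hy))).hasDerivWithinAt
  · exact (hasDerivAt_deriv_sq_mul_log_sub_mul_mul_log c
      (hne y (Ioo_subset_Icc_self hy))).hasDerivWithinAt
  · exact div_nonneg (sub_nonneg.2 (hc y hy)) (hq.trans hy.1).le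

lemma concaveOn_sq_mul_log_sub_mul_mul_log (hq : 0 < q)
    (hc : ∀ y ∈ Ioo q p, y * (3 + 2 * log y) ≤ c) :
    ConcaveOn ℝ (Icc q p) (fun x ↦ x ^ 2 * log x - c * (x * log x)) := by
  have hne : ∀ y ∈ Icc q p, y ≠ 0 := fun y hy ↦ (hq.trans_le hy.1).ne'
  refine concaveOn_of_hasDerivWithinAt2_nonpos (convex_Icc q p)
    (f' := fun x ↦ 2 * (x * log x) + x - c * (log x + 1))
    (f'' := fun x ↦ (x * (3 + 2 * log x) - c) / x)
    (fun y hy ↦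
      (hasDerivAt_sq_mul_log_sub_mul_mul_log c (hne y hy)).continuousAt.continuousWithinAt)
    (fun y hy ↦ ?_) (fun y hy ↦ ?_) (fun y hy ↦ ?_) <;> rw [interior_Icc] at hy
  · exact (hasDerivAt_sq_mul_log_sub_mul_mul_log c
      (hne y (Ioo_subset_Icc_self hy))).hasDerivWithinAt
  · exact (hasDerivAt_deriv_sq_mul_log_sub_mul_mul_log c
      (hne y (Ioo_subset_Icc_self hy))).hasDerivWithinAt
  · exact div_nonpos_of_nonpos_of_nonneg (sub_nonpos.2 (hc y hy)) (hq.trans hy.1).le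

lemma mul_three_add_two_log_le_of_le {x y : ℝ} (hx : 0 < x) (h3 : 0 ≤ 3 + 2 * log x)
    (hxy : x ≤ y) : x * (3 + 2 * log x) ≤ y * (3 + 2 * log y) :=
  calc x * (3 + 2 * log x) ≤ y * (3 + 2 * log x) := mul_le_mul_of_nonneg_right hxy h3
    _ ≤ y * (3 + 2 * log y) := by
      gcongr
      exact (hx.trans_le hxy).le

lemma mul_mul_log_add_le_sq_mul_log (hq : 0 < q) (h3 : 0 ≤ 3 + 2 * log q)
    (hc : c ≤ q * (3 + 2 * log q)) (h1 : (1 : ℝ) ∈ Icc q p) {x : ℝ} (hx : x ∈ Icc q p) :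
    c * (x * log x) + (1 - c) * (x - 1) ≤ x ^ 2 * log x := by
  have hconv := convexOn_sq_mul_log_sub_mul_mul_log (p := p) hq fun y hy ↦
    hc.trans (mul_three_add_two_log_le_of_le hq h3 hy.1.le)
  have := hconv.add_mul_sub_le_of_hasDerivAt h1 hx
    (hasDerivAt_sq_mul_log_sub_mul_mul_log c one_ne_zero)
  simp only [log_one] at this
  linarith

lemma sq_mul_log_le_mul_mul_log_add (hq : 0 < q) (h3 : 0 ≤ 3 + 2 * log q)
    (hc : p * (3 + 2 * log p) ≤ c) (h1 : (1 : ℝ) ∈ Icc q p) {x : ℝ} (hx : x ∈ Icc q p) :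
    x ^ 2 * log x ≤ c * (x * log x) + (1 - c) * (x - 1) := by
  have hconc := concaveOn_sq_mul_log_sub_mul_mul_log hq fun y hy ↦
    (mul_three_add_two_log_le_of_le (hq.trans hy.1)
      (h3.trans (by gcongr; exact hy.1.le)) hy.2.le).trans hc
  have := hconc.le_add_mul_sub_of_hasDerivAt h1 hx
    (hasDerivAt_sq_mul_log_sub_mul_mul_log c one_ne_zero)
  simp only [log_one] at this
  linarith

end SecondDerivative

lemma sum_mul_mul_log_add_mul_sub_one {ι : Type*} [Fintype ι] (c : ℝ) {u : ι → ℝ}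
    (hsum : ∑ i, u i = Fintype.card ι) :
    ∑ i, (c * (u i * log (u i)) + (1 - c) * (u i - 1)) = c * ∑ i, u i * log (u i) := by
  simp [Finset.sum_add_distrib, ← Finset.mul_sum, Finset.sum_sub_distrib, hsum]

lemma natCast_mul_entropyDelta {n : ℕ} (hn : n ≠ 0) (u : Fin n → ℝ) :
    n * entropyDelta n u = ∑ j, u j * log (u j) := by
  rw [entropyDelta, ← mul_assoc, mul_one_div_cancel (Nat.cast_ne_zero.2 hn), one_mul]

theorem stmt_5 (n : ℕ) (hn : 1 ≤ n) (β : ℝ) (hβ0 : 0 ≤ β) (hβ1 : β ≤ 1 / 4)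
    (u : Fin n → ℝ) (hsum : ∑ j, u j = (n : ℝ))
    (hlb : ∀ j, 1 - β ≤ u j) (hub : ∀ j, u j ≤ 1 + β) :
    (3 * (1 - β) + 2 * (1 - β) * Real.log (1 - β)) * n * entropyDelta n u ≤ Delta21 n u ∧
      Delta21 n u ≤ (3 * (1 + β) + 2 * (1 + β) * Real.log (1 + β)) * n * entropyDelta n u := by
  have hq : 0 < 1 - β := by linarith
  have h3 : 0 ≤ 3 + 2 * log (1 - β) := by
    have hinv : (1 - β)⁻¹ ≤ 4 / 3 := by rw [inv_le_comm₀ hq (by norm_num)]; linarith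
    linarith [one_sub_inv_le_log_of_pos hq]
  have h1 : (1 : ℝ) ∈ Icc (1 - β) (1 + β) := ⟨by linarith, by linarith⟩
  have hu : ∀ j, u j ∈ Icc (1 - β) (1 + β) := fun j ↦ ⟨hlb j, hub j⟩
  have hsum' : ∑ j, u j = Fintype.card (Fin n) := by simp [hsum]
  have hδ (c : ℝ) : c * n * entropyDelta n u =
      ∑ j, (c * (u j * log (u j)) + (1 - c) * (u j - 1)) := by
    rw [mul_assoc, natCast_mul_entropyDelta (by omega), sum_mul_mul_log_add_mul_sub_one c hsum']
  rw [hδ, hδ, Delta21]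
  exact ⟨Finset.sum_le_sum fun j _ ↦
      mul_mul_log_add_le_sq_mul_log hq h3 (le_of_eq (by ring)) h1 (hu j),
    Finset.sum_le_sum fun j _ ↦
      sq_mul_log_le_mul_mul_log_add hq h3 (le_of_eq (by ring)) h1 (hu j)⟩
end

section
/- Let n ≥ 2 be an integer and let u ∈ ℝ^n be the vector with u_j = 1/2 for j = 1, …, n−1 and u_n = (n+1)/2 (so ∑_{j=1}^n u_j = n and u_j ≥ 1/2 for all j). Then δ(u) > 0 and Δ12(u) ≥ ln((n+1)/2) · n · δ(u); hence the upper bound Δ12 ≤ 2(ln(n)+1)·n·δ is tight within a constant factor on the set {u > 0 : ∑ u_j = n, u ≥ (1/2)e}. -/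
/-- `Δ12(u) = ∑ u_j ln² u_j`. -/
noncomputable def Delta12 (n : ℕ) (u : Fin n → ℝ) : ℝ :=
  ∑ j, u j * Real.log (u j) ^ 2

lemma key_ineq (k : ℕ) (hk : 1 ≤ k) :
    (k : ℝ) * Real.log 2 < ((k : ℝ) + 2) * Real.log (((k : ℝ) + 2) / 2) := by
  have hlog2 : (0 : ℝ) < Real.log 2 := Real.log_pos (by norm_num)
  have hpos : (0 : ℝ) < ((k : ℝ) + 2) / 2 := by positivity
  have hsplit : Real.log (((k : ℝ) + 2) / 2) = Real.log ((k : ℝ) + 2) - Real.log 2 := by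
    rw [Real.log_div (by positivity) (by norm_num)]
  rw [hsplit]
  have key : (2 * (k : ℝ) + 2) * Real.log 2 < ((k : ℝ) + 2) * Real.log ((k : ℝ) + 2) := by
    rcases eq_or_lt_of_le hk with h | h
    · have hk1 : (k : ℝ) = 1 := by exact_mod_cast h.symm
      rw [hk1]
      have h27 : Real.log 27 = 3 * Real.log 3 := by
        rw [show (27 : ℝ) = 3 ^ 3 by norm_num, Real.log_pow]; push_cast; ring
      have h16 : Real.log 16 = 4 * Real.log 2 := by
        rw [show (16 : ℝ) = 2 ^ 4 by norm_num, Real.log_pow]; push_cast; ring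
      have : Real.log 16 < Real.log 27 := Real.log_lt_log (by norm_num) (by norm_num)
      rw [h27, h16] at this
      norm_num
      linarith
    · have hk2 : 2 ≤ k := h
      have hk2' : (4 : ℝ) ≤ (k : ℝ) + 2 := by
        have : (2 : ℝ) ≤ (k : ℝ) := by exact_mod_cast hk2
        linarith
      have hlog4 : Real.log 4 = 2 * Real.log 2 := by
        rw [show (4 : ℝ) = 2 ^ 2 by norm_num, Real.log_pow]; push_cast; ring
      have h1 : Real.log 4 ≤ Real.log ((k : ℝ) + 2) := Real.log_le_log (by norm_num) hk2'
      rw [hlog4] at h1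
      have h2 : ((k : ℝ) + 2) * (2 * Real.log 2) ≤ ((k : ℝ) + 2) * Real.log ((k : ℝ) + 2) :=
        mul_le_mul_of_nonneg_left h1 (by positivity)
      nlinarith
  nlinarith

theorem stmt_9 (n : ℕ) (hn : 2 ≤ n) (u : Fin n → ℝ)
    (hu : ∀ j : Fin n, u j = if (j : ℕ) < n - 1 then 1 / 2 else ((n : ℝ) + 1) / 2) :
    0 < entropyDelta n u ∧
      Real.log (((n : ℝ) + 1) / 2) * n * entropyDelta n u ≤ Delta12 n u := by
  obtain ⟨k, rfl⟩ : ∃ k, n = k + 1 := ⟨n - 1, by omega⟩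
  have hk : 1 ≤ k := by omega
  have hkcast : ((k + 1 : ℕ) : ℝ) = (k : ℝ) + 1 := by push_cast; ring
  set L := Real.log (((k : ℝ) + 2) / 2) with hLdef
  have hL0 : 0 ≤ L := by
    apply Real.log_nonneg
    have : (1 : ℝ) ≤ (k : ℝ) := by exact_mod_cast hk
    linarith
  have hlog2 : (0 : ℝ) < Real.log 2 := Real.log_pos (by norm_num)
  have hloghalf : Real.log ((1 : ℝ) / 2) = -Real.log 2 := by
    rw [one_div, Real.log_inv]
  -- values of u
  have huc : ∀ j : Fin k, u j.castSucc = 1 / 2 := by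
    intro j
    rw [hu]
    simp [Fin.coe_castSucc, j.isLt]
  have hul : u (Fin.last k) = ((k : ℝ) + 2) / 2 := by
    rw [hu]
    simp [Fin.val_last, hkcast]
    ring
  have hsum1 : ∑ j, u j * Real.log (u j)
      = (k : ℝ) * ((1 / 2) * (-Real.log 2)) + ((k : ℝ) + 2) / 2 * L := by
    rw [Fin.sum_univ_castSucc]
    have : ∀ j : Fin k, u j.castSucc * Real.log (u j.castSucc) = (1 / 2) * (-Real.log 2) := by
      intro j; rw [huc j, hloghalf]
    rw [Finset.sum_congr rfl (fun j _ => this j), Finset.sum_const, Finset.card_univ,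
      Fintype.card_fin, hul, hLdef, nsmul_eq_mul]
  have hsum2 : ∑ j, u j * Real.log (u j) ^ 2
      = (k : ℝ) * ((1 / 2) * Real.log 2 ^ 2) + ((k : ℝ) + 2) / 2 * L ^ 2 := by
    rw [Fin.sum_univ_castSucc]
    have : ∀ j : Fin k, u j.castSucc * Real.log (u j.castSucc) ^ 2
        = (1 / 2) * Real.log 2 ^ 2 := by
      intro j; rw [huc j, hloghalf]; ring
    rw [Finset.sum_congr rfl (fun j _ => this j), Finset.sum_const, Finset.card_univ,
      Fintype.card_fin, hul, hLdef, nsmul_eq_mul]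
  have hkey := key_ineq k hk
  rw [← hLdef] at hkey
  have hS1 : 0 < ∑ j, u j * Real.log (u j) := by
    rw [hsum1]; nlinarith
  have hnpos : (0 : ℝ) < ((k + 1 : ℕ) : ℝ) := by positivity
  constructor
  · unfold entropyDelta
    positivity
  · unfold entropyDelta Delta12
    have hLrw : Real.log ((((k + 1 : ℕ) : ℝ) + 1) / 2) = L := by
      rw [hLdef, hkcast]; ring_nf
    rw [hLrw]
    have hcancel : Real.log (((k : ℝ) + 2) / 2) * ((k + 1 : ℕ) : ℝ) *
        ((1 / ((k + 1 : ℕ) : ℝ)) * ∑ j, u j * Real.log (u j))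
        = L * ∑ j, u j * Real.log (u j) := by
      rw [← hLdef]
      field_simp
    rw [hcancel, hsum1, hsum2]
    nlinarith [sq_nonneg (Real.log 2 + L), mul_nonneg (Nat.cast_nonneg k : (0:ℝ) ≤ k) hL0]
end

section
/- For every η ≥ 0, every α ∈ ℝ, and every linear subspace L ⊆ ℝ^n, with p the orthogonal projection of w(η) onto L and q := w(η) − p, the updated vectors x(α)_j := x_j + α√(x_j/s_j)·p_j and s(α)_j := s_j + α√(s_j/x_j)·q_j satisfy ∑_{j=1}^n x(α)_j s(α)_j = (1−α)·n·μ. -/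
/-! The affine-scaled step splits `w = p + q` into orthogonal parts, so the new duality gap is
`∑ x s + α ⟨v, w⟩ + α² ⟨p, q⟩` with `⟨p, q⟩ = 0`. The entropy correction `δ v - v ln u` is
orthogonal to `v`, because `δ` is exactly the `u`-weighted mean of `ln u` and `v² = μ u`;
hence `⟨v, w⟩ = -⟨v, v⟩ = -n μ` and the gap shrinks by the factor `1 - α`. -/

open Finset Real

lemma Real.sqrt_div_mul_self (a : ℝ) {b : ℝ} (hb : 0 ≤ b) : √(a / b) * b = √(a * b) := by
  rcases hb.eq_or_lt with rfl | hb
  · simp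
  · rw [← sqrt_mul_self hb.le, ← sqrt_mul' _ (mul_self_nonneg b), sqrt_mul_self hb.le]
    field_simp

lemma Real.sqrt_div_mul_sqrt_div {a b : ℝ} (ha : 0 < a) (hb : 0 < b) :
    √(a / b) * √(b / a) = 1 := by
  rw [← inv_div a b, sqrt_inv, mul_inv_cancel₀ (sqrt_pos.mpr (div_pos ha hb)).ne']

lemma scaled_step_mul {x s : ℝ} (hx : 0 < x) (hs : 0 < s) (α p q : ℝ) :
    (x + α * √(x / s) * p) * (s + α * √(s / x) * q)
      = x * s + α * √(x * s) * (p + q) + α ^ 2 * (p * q) := by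
  have hxs := sqrt_div_mul_self x hs.le
  have hsx := sqrt_div_mul_self s hx.le
  rw [mul_comm s x] at hsx
  linear_combination (α * p) * hxs + (α * q) * hsx
    + (α ^ 2 * p * q) * sqrt_div_mul_sqrt_div hx hs

lemma sum_mul_sub_log_eq_zero {ι : Type*} [Fintype ι] (u : ι → ℝ)
    (hu : ∑ j, u j = Fintype.card ι) :
    ∑ j, u j * ((1 / (Fintype.card ι : ℝ)) * ∑ i, u i * log (u i) - log (u j)) = 0 := by
  rcases isEmpty_or_nonempty ι with hι | hι
  · simp
  simp only [mul_sub, sum_sub_distrib, ← sum_mul, hu]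
  field_simp
  ring

lemma sum_mul_entropy_direction {ι : Type*} [Fintype ι] (v u : ι → ℝ) (μ η δ : ℝ)
    (hvu : ∀ j, v j ^ 2 = μ * u j) (hu : ∑ j, u j = Fintype.card ι)
    (hδ : δ = (1 / (Fintype.card ι : ℝ)) * ∑ j, u j * log (u j)) :
    ∑ j, v j * (-v j + η * (δ * v j - v j * log (u j))) = -∑ j, v j ^ 2 := by
  have hcentered := sum_mul_sub_log_eq_zero u hu
  rw [← hδ] at hcentered
  calc ∑ j, v j * (-v j + η * (δ * v j - v j * log (u j)))
      = ∑ j, (-v j ^ 2 + η * μ * (u j * (δ - log (u j)))) :=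
        sum_congr rfl fun j _ => by linear_combination (η * (δ - log (u j))) * hvu j
    _ = -∑ j, v j ^ 2 := by
        rw [sum_add_distrib, ← mul_sum, hcentered, sum_neg_distrib, mul_zero, add_zero]

theorem stmt_11_general (n : ℕ) (x s : Fin n → ℝ)
    (hx : ∀ j, 0 < x j) (hs : ∀ j, 0 < s j)
    (μ : ℝ) (hμ : μ = (∑ j, x j * s j) / n)
    (v u : Fin n → ℝ)
    (hv : ∀ j, v j = Real.sqrt (x j * s j))
    (hu : ∀ j, u j = x j * s j / μ)
    (δ : ℝ) (hδ : δ = (1 / (n : ℝ)) * ∑ j, u j * Real.log (u j))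
    (η : ℝ)
    (w : Fin n → ℝ)
    (hw : ∀ j, w j = -v j + η * (δ * v j - v j * Real.log (u j)))
    (L : Submodule ℝ (Fin n → ℝ)) (p q : Fin n → ℝ)
    (hpL : p ∈ L) (hperp : ∀ y ∈ L, ∑ j, (w j - p j) * y j = 0)
    (hq : ∀ j, q j = w j - p j)
    (α : ℝ) (xα sα : Fin n → ℝ)
    (hxα : ∀ j, xα j = x j + α * Real.sqrt (x j / s j) * p j)
    (hsα : ∀ j, sα j = s j + α * Real.sqrt (s j / x j) * q j) :
    ∑ j, xα j * sα j = (1 - α) * n * μ := by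
  rcases n.eq_zero_or_pos with rfl | hn
  · simp
  have hgap_pos : 0 < ∑ j, x j * s j :=
    sum_pos (fun j _ => mul_pos (hx j) (hs j)) (univ_nonempty_iff.mpr ⟨⟨0, hn⟩⟩)
  have hgap : ∑ j, x j * s j = n * μ := by rw [hμ]; field_simp
  have hμ0 : μ ≠ 0 := by rintro rfl; rw [mul_zero] at hgap; exact hgap_pos.ne' hgap
  have hv_sq (j) : v j ^ 2 = x j * s j := by
    rw [hv, sq_sqrt (mul_pos (hx j) (hs j)).le]
  have hvw : ∑ j, v j * w j = -(n * μ) := by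
    simp_rw [hw, ← hgap, ← hv_sq]
    refine sum_mul_entropy_direction v u μ η δ (fun j => ?_) ?_ (by simpa using hδ)
    · rw [hv_sq, hu]; field_simp
    · simp_rw [hu, ← sum_div, hgap, Fintype.card_fin]; field_simp
  have hpq : ∑ j, p j * q j = 0 := by simpa [hq, mul_comm] using hperp p hpL
  calc ∑ j, xα j * sα j
      = ∑ j, (x j * s j + α * (v j * w j) + α ^ 2 * (p j * q j)) := sum_congr rfl fun j _ => by
        rw [hxα, hsα, scaled_step_mul (hx j) (hs j), hv, hq]; ring
    _ = (1 - α) * n * μ := by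
        rw [sum_add_distrib, sum_add_distrib, ← mul_sum, ← mul_sum, hgap, hvw, hpq]; ring

theorem stmt_11 (n : ℕ) (hn : 1 ≤ n) (x s : Fin n → ℝ)
    (hx : ∀ j, 0 < x j) (hs : ∀ j, 0 < s j)
    (μ : ℝ) (hμ : μ = (∑ j, x j * s j) / n)
    (v u : Fin n → ℝ)
    (hv : ∀ j, v j = Real.sqrt (x j * s j))
    (hu : ∀ j, u j = x j * s j / μ)
    (δ : ℝ) (hδ : δ = (1 / (n : ℝ)) * ∑ j, u j * Real.log (u j))
    (η : ℝ) (hη : 0 ≤ η)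
    (w : Fin n → ℝ)
    (hw : ∀ j, w j = -v j + η * (δ * v j - v j * Real.log (u j)))
    (L : Submodule ℝ (Fin n → ℝ)) (p q : Fin n → ℝ)
    (hpL : p ∈ L) (hperp : ∀ y ∈ L, ∑ j, (w j - p j) * y j = 0)
    (hq : ∀ j, q j = w j - p j)
    (α : ℝ) (xα sα : Fin n → ℝ)
    (hxα : ∀ j, xα j = x j + α * Real.sqrt (x j / s j) * p j)
    (hsα : ∀ j, sα j = s j + α * Real.sqrt (s j / x j) * q j) :
    ∑ j, xα j * sα j = (1 - α) * n * μ :=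
  stmt_11_general n x s hx hs μ hμ v u hv hu δ hδ η w hw L p q hpL hperp hq α xα sα hxα hsα
end

section
/- For every η ≥ 0, the entropy-based scaled right-hand side satisfies ‖w(η)‖₂² = n·μ·(1 − η²·(δ² − Δ12(u)/n)), where Δ12(u) := ∑_{j=1}^n u_j ln²(u_j). -/
theorem stmt_12 (n : ℕ) (hn : 1 ≤ n) (x s : Fin n → ℝ)
    (hx : ∀ j, 0 < x j) (hs : ∀ j, 0 < s j)
    (μ : ℝ) (hμ : μ = (∑ j, x j * s j) / n)
    (v u : Fin n → ℝ)
    (hv : ∀ j, v j = Real.sqrt (x j * s j))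
    (hu : ∀ j, u j = x j * s j / μ)
    (δ : ℝ) (hδ : δ = (1 / (n : ℝ)) * ∑ j, u j * Real.log (u j))
    (Δ12 : ℝ) (hΔ12 : Δ12 = ∑ j, u j * Real.log (u j) ^ 2)
    (η : ℝ) (hη : 0 ≤ η)
    (w : Fin n → ℝ)
    (hw : ∀ j, w j = -v j + η * (δ * v j - v j * Real.log (u j))) :
    ∑ j, w j ^ 2 = n * μ * (1 - η ^ 2 * (δ ^ 2 - Δ12 / n)) := by
  have hnpos : (0 : ℝ) < n := by exact_mod_cast hn
  have hμpos : 0 < μ := by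
    rw [hμ]
    apply div_pos _ hnpos
    apply Finset.sum_pos (fun j _ => mul_pos (hx j) (hs j))
    have : Nonempty (Fin n) := Fin.pos_iff_nonempty.mp hn
    exact Finset.univ_nonempty
  have hv2 : ∀ j, v j ^ 2 = μ * u j := by
    intro j
    rw [hv, Real.sq_sqrt (le_of_lt (mul_pos (hx j) (hs j))), hu]
    field_simp
  have hsum_u : ∑ j, u j = n := by
    have : ∑ j, u j = (∑ j, x j * s j) / μ := by
      rw [Finset.sum_div]; exact Finset.sum_congr rfl fun j _ => hu j
    have hspos : 0 < ∑ j, x j * s j := by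
      apply Finset.sum_pos (fun j _ => mul_pos (hx j) (hs j))
      have : Nonempty (Fin n) := Fin.pos_iff_nonempty.mp hn
      exact Finset.univ_nonempty
    rw [this, hμ]
    field_simp
  have hsum_ul : ∑ j, u j * Real.log (u j) = n * δ := by
    rw [hδ]; field_simp
  have key : ∀ j, w j ^ 2 =
      (μ * (1 - 2*η*δ + η^2*δ^2)) * u j
      + (μ * (2*η - 2*η^2*δ)) * (u j * Real.log (u j))
      + (μ * η^2) * (u j * Real.log (u j) ^ 2) := by
    intro j
    have h1 : w j ^ 2 = v j ^ 2 * (η * (δ - Real.log (u j)) - 1) ^ 2 := by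
      rw [hw]; ring
    rw [h1, hv2]; ring
  rw [Finset.sum_congr rfl fun j _ => key j]
  simp only [Finset.sum_add_distrib, ← Finset.mul_sum]
  rw [hsum_u, hsum_ul, ← hΔ12]
  field_simp
  ring
end

section
/- Assume ∑_{j=1}^n (u_j − 1)² ≤ 1/16. Then the quantities d₁ := 32(δ·∑_j x_j²s_j² − Δ21·μ²) + 6μ², d₂ := 16(δ²·∑_j (x_js_j)² + Δ22·μ² − 2δ·Δ21·μ² + 2C) − d₁ − 3μ², d₃ := 32(δ−1)C − 32B, and d₄ := 16∑_j p_j²q_j², where B := ∑_j x_js_j ln(u_j) p_j q_j and C := ∑_j x_js_j p_j q_j, satisfy d₁ ≤ 7μ², d₂ ≤ 20nμ², d₃ ≤ 64 n^{3/2} μ², and d₄ ≤ 5n²μ². -/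
-- per-index log facts, stated in sum-ready form
lemma aux_log (z : ℝ) (h1 : 3/4 ≤ z) (h2 : z ≤ 5/4) :
    z - 1 ≤ z * Real.log z ∧ z * Real.log z ≤ (z - 1) + (z - 1)^2 ∧
    z * Real.log z ≤ z^2 * Real.log z ∧
    z^2 * Real.log z ≤ z * Real.log z + (5/3) * (z - 1)^2 ∧
    z * Real.log z ^ 2 ≤ (4/3) * (z - 1)^2 ∧
    -(1/3) ≤ Real.log z ∧ Real.log z ≤ 1/4 := by
  have hz : (0:ℝ) < z := by linarith
  have hub : Real.log z ≤ z - 1 := Real.log_le_sub_one_of_pos hz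
  have hlb : z - 1 ≤ z * Real.log z := by
    have h := Real.log_le_sub_one_of_pos (x := z⁻¹) (by positivity)
    rw [Real.log_inv] at h
    have h' : 1 - z⁻¹ ≤ Real.log z := by linarith
    have := mul_le_mul_of_nonneg_left h' hz.le
    have hzz : z * (1 - z⁻¹) = z - 1 := by field_simp
    linarith [hzz ▸ this]
  set L := Real.log z with hL
  have hLlb : -(1/3) ≤ L := by nlinarith
  have hLub : L ≤ 1/4 := by linarith
  have hA3 : 0 ≤ z * ((z - 1) * L) := by
    rcases le_or_gt z 1 with hc | hc
    · have hL0 : L ≤ 0 := by linarith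
      nlinarith [mul_nonneg (by linarith : (0:ℝ) ≤ 1 - z) (by linarith : (0:ℝ) ≤ -L)]
    · have hL0 : 0 ≤ L := by nlinarith
      nlinarith [mul_nonneg (by linarith : (0:ℝ) ≤ z - 1) hL0]
  have hA4 : z * ((z - 1) * L) ≤ (5/3) * (z - 1)^2 := by
    rcases le_or_gt z 1 with hc | hc
    · have hL0 : L ≤ 0 := by linarith
      have hLt : (4/3) * (z - 1) ≤ L := by nlinarith
      nlinarith [sq_nonneg (z-1), mul_nonneg (by linarith : (0:ℝ) ≤ 1 - z) (by linarith : (0:ℝ) ≤ -L)]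
    · have hL0 : 0 ≤ L := by nlinarith
      nlinarith [mul_nonneg (by linarith : (0:ℝ) ≤ z - 1) hL0, sq_nonneg (z-1)]
  have hA5 : z * L^2 ≤ (4/3) * (z - 1)^2 := by
    rcases le_or_gt z 1 with hc | hc
    · have hL0 : L ≤ 0 := by linarith
      have hzL : z * L ≤ 0 := mul_nonpos_iff.2 (Or.inl ⟨hz.le, hL0⟩)
      have huL2 : (z*L)^2 ≤ (z-1)^2 := by
        nlinarith [mul_nonneg (by linarith : (0:ℝ) ≤ -(z-1) - (-(z*L))) (by linarith : (0:ℝ) ≤ -(z*L))]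
      nlinarith [sq_nonneg L, mul_nonneg (mul_nonneg hz.le (sq_nonneg L)) (by linarith : (0:ℝ) ≤ z - 3/4)]
    · have hL0 : 0 ≤ L := by nlinarith
      nlinarith [sq_nonneg L, sq_nonneg (z-1), mul_le_mul_of_nonneg_left hub hL0]
  refine ⟨hlb, ?_, by nlinarith, by nlinarith, hA5, hLlb, hLub⟩
  nlinarith [mul_le_mul_of_nonneg_left hub hz.le]

-- pointwise bound for the Δ22-type term
lemma aux_sq (z d : ℝ) (h1 : 3/4 ≤ z) (h2 : z ≤ 5/4)
    (hd0 : 0 ≤ d) (hd1 : d ≤ 1/16) :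
    z^2 * (d - Real.log z)^2 ≤ 1/4 := by
  obtain ⟨-, -, -, -, -, hLlb, hLub⟩ := aux_log z h1 h2
  set L := Real.log z
  have h3 : (d - L)^2 ≤ (19/48)^2 := by
    have : -(1/4) ≤ d - L := by linarith
    have : d - L ≤ 19/48 := by linarith
    nlinarith
  nlinarith [sq_nonneg (d - L), sq_nonneg z]

-- |X| ≤ (a+b)/8 from X² ≤ ab/16
lemma aux_cs (X a b : ℝ) (ha : 0 ≤ a) (hb : 0 ≤ b) (h : X^2 ≤ (1/16) * a * b) :
    X ≤ (a + b) / 8 := by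
  nlinarith [sq_nonneg (a - b), sq_nonneg (X - (a+b)/8), sq_nonneg (X + (a+b)/8)]

lemma aux_amgm (a b : ℝ) : a * b ≤ ((a + b)/2)^2 := by nlinarith [sq_nonneg (a - b)]

lemma aux_d4 (m : ℝ) (hm : 1 ≤ m) : (m + 1/12)^2 ≤ (5/4) * m^2 := by nlinarith

lemma aux_d3 (μ a b m sa sb sc sn : ℝ) (hμ : 0 < μ)
    (ha : 0 ≤ a) (hb : 0 ≤ b) (hm : 1 ≤ m)
    (hsa : sa^2 = a) (hsb : sb^2 = b) (hsc : sc^2 = 5*μ/4) (hsn : sn^2 = m)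
    (hab : a + b ≤ μ * (m + 1/12)) :
    (32 * (sc * (a * sb + b * sa)))^2 ≤ (64 * (m * sn) * μ^2)^2 := by
  obtain ⟨X, hX⟩ : ∃ X, X = a * sb + b * sa := ⟨_, rfl⟩
  rw [← hX]
  have h1 : sa * sb ≤ (a + b)/2 := by nlinarith [sq_nonneg (sa - sb)]
  have h2 : X^2 = a*b*(a+b) + 2*(a*b)*(sa*sb) := by
    rw [hX]; linear_combination a^2 * hsb + b^2 * hsa
  have h3 : X^2 ≤ 2*(a*b)*(a+b) := by
    nlinarith [mul_le_mul_of_nonneg_left h1 (mul_nonneg ha hb)]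
  have h4 : 2*(a*b)*(a+b) ≤ (a+b)^3/2 := by
    nlinarith [mul_nonneg (add_nonneg ha hb) (sq_nonneg (a-b))]
  have h5 : (a+b)^3 ≤ (μ*(m+1/12))^3 :=
    pow_le_pow_left₀ (add_nonneg ha hb) hab 3
  have hX2 : X^2 ≤ (μ*(m+1/12))^3 / 2 := by linarith
  have hL : (32 * (sc * X))^2 = 1280*μ*X^2 := by linear_combination (1024*X^2) * hsc
  have hR : (64*(m*sn)*μ^2)^2 = 4096*m^3*μ^4 := by linear_combination (4096*m^2*μ^4) * hsn
  rw [hL, hR]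
  have h6 : (m+1/12)^3 ≤ ((13/12)*m)^3 :=
    pow_le_pow_left₀ (by linarith) (by linarith) 3
  have h7 : μ*X^2 ≤ μ*((μ*(m+1/12))^3 / 2) := mul_le_mul_of_nonneg_left hX2 hμ.le
  have h8 : μ*((μ*(m+1/12))^3 / 2) = (μ^4*(m+1/12)^3)/2 := by ring
  have h9 : μ^4*(m+1/12)^3 ≤ μ^4*(((13/12)*m)^3) :=
    mul_le_mul_of_nonneg_left h6 (by positivity)
  have h10 : μ^4*(((13/12)*m)^3) = (2197/1728)*(m^3*μ^4) := by ring
  nlinarith [pow_nonneg hμ.le 4, mul_nonneg (pow_nonneg (by linarith : (0:ℝ) ≤ m) 3) (pow_nonneg hμ.le 4)]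
set_option maxHeartbeats 1000000 in
theorem stmt_14 (n : ℕ) (hn : 1 ≤ n) (x s : Fin n → ℝ)
    (hx : ∀ j, 0 < x j) (hs : ∀ j, 0 < s j)
    (μ : ℝ) (hμ : μ = (∑ j, x j * s j) / n)
    (v u : Fin n → ℝ)
    (hv : ∀ j, v j = Real.sqrt (x j * s j))
    (hu : ∀ j, u j = x j * s j / μ)
    (δ : ℝ) (hδ : δ = (1 / (n : ℝ)) * ∑ j, u j * Real.log (u j))
    (Δ21 : ℝ) (hΔ21 : Δ21 = ∑ j, u j ^ 2 * Real.log (u j))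
    (Δ22 : ℝ) (hΔ22 : Δ22 = ∑ j, u j ^ 2 * Real.log (u j) ^ 2)
    (w : Fin n → ℝ)
    (hw : ∀ j, w j = -v j + δ * v j - v j * Real.log (u j))
    (L : Submodule ℝ (Fin n → ℝ)) (p q : Fin n → ℝ)
    (hpL : p ∈ L) (hperp : ∀ y ∈ L, ∑ j, (w j - p j) * y j = 0)
    (hq : ∀ j, q j = w j - p j)
    (hnbhd : ∑ j, (u j - 1) ^ 2 ≤ 1 / 16)
    (B C d1 d2 d3 d4 : ℝ)
    (hB : B = ∑ j, x j * s j * Real.log (u j) * p j * q j)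
    (hC : C = ∑ j, x j * s j * p j * q j)
    (hd1 : d1 = 32 * (δ * ∑ j, (x j) ^ 2 * (s j) ^ 2 - Δ21 * μ ^ 2) + 6 * μ ^ 2)
    (hd2 : d2 = 16 * (δ ^ 2 * ∑ j, (x j * s j) ^ 2 + Δ22 * μ ^ 2 - 2 * δ * Δ21 * μ ^ 2 + 2 * C)
      - d1 - 3 * μ ^ 2)
    (hd3 : d3 = 32 * (δ - 1) * C - 32 * B)
    (hd4 : d4 = 16 * ∑ j, p j ^ 2 * q j ^ 2) :
    d1 ≤ 7 * μ ^ 2 ∧ d2 ≤ 20 * n * μ ^ 2 ∧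
      d3 ≤ 64 * (n : ℝ) ^ ((3 : ℝ) / 2) * μ ^ 2 ∧ d4 ≤ 5 * n ^ 2 * μ ^ 2 := by
  have hnR : (1:ℝ) ≤ (n:ℝ) := by exact_mod_cast hn
  have hn0 : (0:ℝ) < (n:ℝ) := by linarith
  have : Nonempty (Fin n) := ⟨⟨0, hn⟩⟩
  have hsum_pos : 0 < ∑ j, x j * s j :=
    Finset.sum_pos (fun j _ => mul_pos (hx j) (hs j)) Finset.univ_nonempty
  have hμpos : 0 < μ := by rw [hμ]; positivity
  have hxs : ∀ j, x j * s j = μ * u j := by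
    intro j; rw [hu j]; field_simp
  have hsum_xs : ∑ j, x j * s j = n * μ := by
    rw [hμ]; field_simp
  have hsum_u : ∑ j, u j = n := by
    have h1 : ∑ j, u j = (∑ j, x j * s j) / μ := by
      rw [Finset.sum_div]; exact Finset.sum_congr rfl fun j _ => hu j
    rw [h1, hsum_xs]; field_simp
  have hupos : ∀ j, 0 < u j := by
    intro j; rw [hu j]; exact div_pos (mul_pos (hx j) (hs j)) hμpos
  have hub : ∀ j, 3/4 ≤ u j ∧ u j ≤ 5/4 := by
    intro j
    have h := Finset.single_le_sum (f := fun j => (u j - 1)^2)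
      (fun i _ => sq_nonneg _) (Finset.mem_univ j)
    have h2 : (u j - 1)^2 ≤ 1/16 := h.trans hnbhd
    constructor <;> nlinarith
  have haux := fun j => aux_log (u j) (hub j).1 (hub j).2
  have hsum_t : ∑ j, (u j - 1) = 0 := by
    rw [Finset.sum_sub_distrib, hsum_u]; simp
  have hδ' : ∑ j, u j * Real.log (u j) = n * δ := by
    rw [hδ]; field_simp
  have hδ0 : 0 ≤ δ := by
    have h1 : ∑ j, (u j - 1) ≤ ∑ j, u j * Real.log (u j) :=
      Finset.sum_le_sum fun j _ => (haux j).1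
    rw [hsum_t, hδ'] at h1
    by_contra h; push_neg at h
    nlinarith [mul_pos hn0 (neg_pos.2 h)]
  have hT0 : 0 ≤ ∑ j, (u j - 1)^2 := Finset.sum_nonneg fun j _ => sq_nonneg _
  have hT16 : ∑ j, (u j - 1)^2 ≤ 1/16 := hnbhd
  have hnδT : n * δ ≤ ∑ j, (u j - 1)^2 := by
    have h1 : ∑ j, u j * Real.log (u j) ≤ ∑ j, ((u j - 1) + (u j - 1)^2) :=
      Finset.sum_le_sum fun j _ => (haux j).2.1
    rw [Finset.sum_add_distrib, hsum_t, hδ'] at h1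
    linarith
  have hδ16 : δ ≤ 1/16 := by
    have h : 1 * δ ≤ (n:ℝ) * δ := mul_le_mul_of_nonneg_right hnR hδ0
    linarith
  have hI1 : ∑ j, (u j)^2 = (n:ℝ) + ∑ j, (u j - 1)^2 := by
    have h1 : ∀ j ∈ Finset.univ, (u j)^2 = ((u j - 1)^2 + 2 * u j) - 1 := by
      intro j _; ring
    rw [Finset.sum_congr rfl h1, Finset.sum_sub_distrib, Finset.sum_add_distrib,
      ← Finset.mul_sum, hsum_u]
    simp [Finset.card_univ]
    ring
  have hΔ21_lb : n * δ ≤ Δ21 := by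
    have h1 : ∑ j, u j * Real.log (u j) ≤ ∑ j, (u j)^2 * Real.log (u j) :=
      Finset.sum_le_sum fun j _ => (haux j).2.2.1
    rw [hδ'] at h1; rw [hΔ21]; linarith
  have hΔ21_ub : Δ21 ≤ n * δ + (5/3) * ∑ j, (u j - 1)^2 := by
    have h1 : ∑ j, (u j)^2 * Real.log (u j)
        ≤ ∑ j, (u j * Real.log (u j) + (5/3) * (u j - 1)^2) :=
      Finset.sum_le_sum fun j _ => (haux j).2.2.2.1
    rw [Finset.sum_add_distrib, hδ', ← Finset.mul_sum] at h1
    rw [hΔ21]; linarith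
  set T := ∑ j, (u j - 1)^2 with hTdef
  clear_value T
  have hxs2 : ∑ j, (x j * s j)^2 = μ^2 * ∑ j, (u j)^2 := by
    rw [Finset.mul_sum]
    refine Finset.sum_congr rfl fun j _ => ?_
    rw [hxs j]; ring
  have hxs2' : ∑ j, (x j)^2 * (s j)^2 = μ^2 * ∑ j, (u j)^2 := by
    rw [← hxs2]
    refine Finset.sum_congr rfl fun j _ => ?_
    ring
  have hδT : δ * T ≤ 1/256 :=
    le_trans (mul_le_mul hδ16 hT16 hT0 (by norm_num)) (by norm_num)
  have hδT0 : 0 ≤ δ * T := mul_nonneg hδ0 hT0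
  have hEex : δ * ∑ j, (u j)^2 = (n:ℝ)*δ + δ*T := by
    rw [hI1]; ring
  have hE_ub : δ * ∑ j, (u j)^2 - Δ21 ≤ 1/256 := by
    linarith
  have hE_lb : -(5/48) ≤ δ * ∑ j, (u j)^2 - Δ21 := by
    have h2 : (5/3)*T ≤ 5/48 := by linarith
    linarith
  have hμ2 : 0 ≤ μ^2 := sq_nonneg μ
  have hd1eq : d1 = 32*(μ^2*(δ * ∑ j, (u j)^2 - Δ21)) + 6*μ^2 := by
    rw [hd1, hxs2']; ring
  have hd1_ub : d1 ≤ 7 * μ^2 := by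
    have := mul_le_mul_of_nonneg_left hE_ub hμ2
    linarith
  have hd1_lb : (8/3) * μ^2 ≤ d1 := by
    have := mul_le_mul_of_nonneg_left hE_lb hμ2
    linarith
  have hv2 : ∀ j, (v j)^2 = μ * u j := by
    intro j
    rw [hv j, Real.sq_sqrt (mul_pos (hx j) (hs j)).le, hxs j]
  have hw_pq : ∀ j, w j = p j + q j := by
    intro j; rw [hq j]; ring
  have hpq0 : ∑ j, p j * q j = 0 := by
    have h := hperp p hpL
    calc ∑ j, p j * q j = ∑ j, (w j - p j) * p j := by
          refine Finset.sum_congr rfl fun j _ => ?_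
          rw [hq j]; ring
      _ = 0 := h
  set a := ∑ j, (p j)^2 with hadef
  set b := ∑ j, (q j)^2 with hbdef
  have ha0 : 0 ≤ a := Finset.sum_nonneg fun j _ => sq_nonneg _
  have hb0 : 0 ≤ b := Finset.sum_nonneg fun j _ => sq_nonneg _
  have hp_ub : ∀ j, p j ≤ Real.sqrt a := by
    intro j
    refine le_trans (le_abs_self _) ?_
    rw [← Real.sqrt_sq_eq_abs]
    exact Real.sqrt_le_sqrt (Finset.single_le_sum (fun i _ => sq_nonneg (p i)) (Finset.mem_univ j))
  have hq_ub : ∀ j, q j ≤ Real.sqrt b := by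
    intro j
    refine le_trans (le_abs_self _) ?_
    rw [← Real.sqrt_sq_eq_abs]
    exact Real.sqrt_le_sqrt (Finset.single_le_sum (fun i _ => sq_nonneg (q i)) (Finset.mem_univ j))
  have hqsq_ub : ∀ j, (q j)^2 ≤ b := fun j =>
    Finset.single_le_sum (fun i _ => sq_nonneg (q i)) (Finset.mem_univ j)
  have hSid : ∑ j, (w j)^2 = a + b := by
    have h1 : ∀ j ∈ Finset.univ, (w j)^2 = ((p j)^2 + (q j)^2) + 2*(p j * q j) :=
      fun j _ => by rw [hw_pq j]; ring
    rw [Finset.sum_congr rfl h1, Finset.sum_add_distrib, Finset.sum_add_distrib,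
      ← Finset.mul_sum, hpq0, hadef, hbdef]
    ring
  clear_value a b
  have hw2 : ∀ j, (w j)^2 = μ * (u j + u j * Real.log (u j)^2 + δ^2 * u j
      + 2*(u j * Real.log (u j)) - 2*δ*u j - 2*δ*(u j * Real.log (u j))) := by
    intro j
    rw [hw j]
    linear_combination ((δ - 1 - Real.log (u j))^2) * hv2 j
  have hL2 : ∑ j, u j * Real.log (u j)^2 ≤ 1/12 := by
    have h1 : ∑ j, u j * Real.log (u j)^2 ≤ ∑ j, (4/3)*(u j - 1)^2 :=
      Finset.sum_le_sum fun j _ => (haux j).2.2.2.2.1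
    rw [← Finset.mul_sum, ← hTdef] at h1
    linarith
  have hsum_w : ∑ j, (w j)^2 = μ * ((n:ℝ) + ∑ j, u j * Real.log (u j)^2 - (n:ℝ)*δ^2) := by
    calc ∑ j, (w j)^2
        = ∑ j, μ * (u j + u j * Real.log (u j)^2 + δ^2 * u j
            + 2*(u j * Real.log (u j)) - 2*δ*u j - 2*δ*(u j * Real.log (u j))) :=
          Finset.sum_congr rfl fun j _ => hw2 j
      _ = μ * ((∑ j, u j) + (∑ j, u j * Real.log (u j)^2) + δ^2 * (∑ j, u j)
            + 2*(∑ j, u j * Real.log (u j)) - 2*δ*(∑ j, u j)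
            - 2*δ*(∑ j, u j * Real.log (u j))) := by
          rw [← Finset.mul_sum]
          congr 1
          rw [Finset.sum_sub_distrib, Finset.sum_sub_distrib, Finset.sum_add_distrib,
            Finset.sum_add_distrib, Finset.sum_add_distrib, ← Finset.mul_sum,
            ← Finset.mul_sum, ← Finset.mul_sum, ← Finset.mul_sum]
      _ = μ * ((n:ℝ) + ∑ j, u j * Real.log (u j)^2 - (n:ℝ)*δ^2) := by
          rw [hsum_u, hδ']; ring
  have hab_ub : a + b ≤ μ * ((n:ℝ) + 1/12) := by
    rw [← hSid, hsum_w]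
    have h1 : (0:ℝ) ≤ (n:ℝ)*δ^2 := by positivity
    have h2 : (n:ℝ) + ∑ j, u j * Real.log (u j)^2 - (n:ℝ)*δ^2 ≤ (n:ℝ) + 1/12 := by linarith
    exact mul_le_mul_of_nonneg_left h2 hμpos.le
  -- d2 part
  have hQ2 : ∑ j, (u j)^2 * (δ - Real.log (u j))^2 ≤ (n:ℝ)*(1/4) := by
    have h1 : ∑ j, (u j)^2 * (δ - Real.log (u j))^2 ≤ ∑ j, (1/4 : ℝ) :=
      Finset.sum_le_sum fun j _ => aux_sq (u j) δ (hub j).1 (hub j).2 hδ0 hδ16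
    rw [Finset.sum_const, Finset.card_univ, Fintype.card_fin, nsmul_eq_mul] at h1
    linarith
  have hQid : ∑ j, (u j)^2 * (δ - Real.log (u j))^2
      = δ^2 * ∑ j, (u j)^2 + Δ22 - 2*δ*Δ21 := by
    rw [hΔ22, hΔ21, Finset.mul_sum, Finset.mul_sum]
    rw [← Finset.sum_add_distrib, ← Finset.sum_sub_distrib]
    refine Finset.sum_congr rfl fun j _ => ?_
    ring
  have hub2 : ∀ j, (u j - 1)^2 ≤ 1/16 := by
    intro j
    have h := Finset.single_le_sum (f := fun j => (u j - 1)^2)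
      (fun i _ => sq_nonneg _) (Finset.mem_univ j)
    rw [← hTdef] at h
    exact le_trans h hT16
  have hCeq : C = μ * ∑ j, (u j - 1) * (p j * q j) := by
    have h1 : ∑ j, x j * s j * p j * q j = ∑ j, μ * (u j * (p j * q j)) :=
      Finset.sum_congr rfl fun j _ => by rw [hxs j]; ring
    have h2 : ∑ j, (u j - 1) * (p j * q j) = ∑ j, u j * (p j * q j) - ∑ j, p j * q j := by
      rw [← Finset.sum_sub_distrib]
      refine Finset.sum_congr rfl fun j _ => ?_
      ring
    rw [hC, h1, ← Finset.mul_sum, h2, hpq0]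
    ring
  have hX2 : (∑ j, (u j - 1) * (p j * q j))^2 ≤ (1/16) * a * b := by
    have hcs := Finset.sum_mul_sq_le_sq_mul_sq Finset.univ (fun j => (u j - 1) * p j) q
    have h1 : ∑ j, ((u j - 1) * p j) * q j = ∑ j, (u j - 1) * (p j * q j) :=
      Finset.sum_congr rfl fun j _ => by ring
    have h2 : ∑ j, ((u j - 1) * p j)^2 ≤ (1/16) * a := by
      have h3 : ∑ j, ((u j - 1) * p j)^2 ≤ ∑ j, (1/16) * (p j)^2 := by
        refine Finset.sum_le_sum fun j _ => ?_
        rw [mul_pow]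
        exact mul_le_mul_of_nonneg_right (hub2 j) (sq_nonneg _)
      rwa [← Finset.mul_sum, ← hadef] at h3
    calc (∑ j, (u j - 1) * (p j * q j))^2
        ≤ (∑ j, ((u j - 1) * p j)^2) * b := by rw [← h1, hbdef]; exact hcs
      _ ≤ (1/16) * a * b := mul_le_mul_of_nonneg_right h2 hb0
  have hCb : C ≤ μ * ((a + b)/8) := by
    rw [hCeq]
    exact mul_le_mul_of_nonneg_left (aux_cs _ a b ha0 hb0 hX2) hμpos.le
  have hd2eq : d2 = 16*(μ^2*(δ^2 * ∑ j, (u j)^2 + Δ22 - 2*δ*Δ21)) + 32*C - d1 - 3*μ^2 := by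
    rw [hd2, hxs2]; ring
  have hd2_ub : d2 ≤ 20*(n:ℝ)*μ^2 := by
    have h1 : μ^2*(δ^2 * ∑ j, (u j)^2 + Δ22 - 2*δ*Δ21) ≤ μ^2*((n:ℝ)*(1/4)) := by
      refine mul_le_mul_of_nonneg_left ?_ hμ2
      rw [← hQid]; exact hQ2
    have h4 : (a+b)/8 ≤ (μ*((n:ℝ)+1/12))/8 := by linarith
    have h5 : C ≤ μ * ((μ*((n:ℝ)+1/12))/8) :=
      hCb.trans (mul_le_mul_of_nonneg_left h4 hμpos.le)
    have h6 : μ * ((μ*((n:ℝ)+1/12))/8) = ((n:ℝ)*μ^2)/8 + μ^2/96 := by ring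
    have h7 : μ^2*((n:ℝ)*(1/4)) = ((n:ℝ)*μ^2)/4 := by ring
    have hnμ2 : 0 ≤ (n:ℝ)*μ^2 := by positivity
    linarith
  -- d4
  have hd4sum : ∑ j, (p j)^2 * (q j)^2 ≤ a * b := by
    have h1 : ∑ j, (p j)^2 * (q j)^2 ≤ ∑ j, (p j)^2 * b :=
      Finset.sum_le_sum fun j _ => mul_le_mul_of_nonneg_left (hqsq_ub j) (sq_nonneg _)
    rwa [← Finset.sum_mul, ← hadef] at h1
  have hd4_ub : d4 ≤ 5*(n:ℝ)^2*μ^2 := by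
    have h2 : a * b ≤ ((a+b)/2)^2 := aux_amgm a b
    have h3 : ((a+b)/2)^2 ≤ ((μ*((n:ℝ)+1/12))/2)^2 := by
      have := pow_le_pow_left₀ (by linarith : (0:ℝ) ≤ (a+b)/2)
        (by linarith : (a+b)/2 ≤ (μ*((n:ℝ)+1/12))/2) 2
      exact this
    have h4 : ((μ*((n:ℝ)+1/12))/2)^2 = (μ^2/4) * ((n:ℝ)+1/12)^2 := by ring
    have h5 : ((n:ℝ)+1/12)^2 ≤ (5/4)*(n:ℝ)^2 := aux_d4 (n:ℝ) hnR
    have h6 : (μ^2/4) * ((n:ℝ)+1/12)^2 ≤ (μ^2/4) * ((5/4)*(n:ℝ)^2) :=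
      mul_le_mul_of_nonneg_left h5 (by positivity)
    have h7 : (μ^2/4) * ((5/4)*(n:ℝ)^2) = (5/16)*((n:ℝ)^2*μ^2) := by ring
    have h8 : (0:ℝ) ≤ (n:ℝ)^2*μ^2 := by positivity
    rw [hd4]
    linarith
  -- d3
  have hvw : ∀ j, v j * w j = μ * u j * (δ - 1 - Real.log (u j)) := by
    intro j
    rw [hw j]
    linear_combination (δ - 1 - Real.log (u j)) * hv2 j
  have hd3eq : d3 = 32 * ∑ j, v j * w j * (p j * q j) := by
    have h1 : ∑ j, v j * w j * (p j * q j) = (δ-1)*C - B := by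
      rw [hB, hC, Finset.mul_sum, ← Finset.sum_sub_distrib]
      refine Finset.sum_congr rfl fun j _ => ?_
      rw [hvw j, hxs j]
      ring
    rw [hd3, h1]; ring
  have hv0 : ∀ j, 0 ≤ v j := fun j => by rw [hv j]; exact Real.sqrt_nonneg _
  have hv_ub : ∀ j, v j ≤ Real.sqrt (5*μ/4) := by
    intro j
    rw [hv j]
    apply Real.sqrt_le_sqrt
    rw [hxs j]
    have := mul_le_mul_of_nonneg_left (hub j).2 hμpos.le
    linarith
  have hsb0 : 0 ≤ Real.sqrt b := Real.sqrt_nonneg b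
  have hsa0 : 0 ≤ Real.sqrt a := Real.sqrt_nonneg a
  have hsum_d3 : ∑ j, v j * w j * (p j * q j)
      ≤ Real.sqrt (5*μ/4) * (a * Real.sqrt b + b * Real.sqrt a) := by
    have h1 : ∀ j ∈ Finset.univ, v j * w j * (p j * q j)
        ≤ Real.sqrt (5*μ/4) * ((p j)^2 * Real.sqrt b)
          + Real.sqrt (5*μ/4) * (Real.sqrt a * (q j)^2) := by
      intro j _
      have e : v j * w j * (p j * q j)
          = v j * (p j)^2 * q j + v j * (q j)^2 * p j := by
        rw [hw_pq j]; ring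
      rw [e]
      have s1 : v j * (p j)^2 * q j ≤ v j * (p j)^2 * Real.sqrt b :=
        mul_le_mul_of_nonneg_left (hq_ub j) (mul_nonneg (hv0 j) (sq_nonneg _))
      have s2 : v j * (p j)^2 * Real.sqrt b ≤ Real.sqrt (5*μ/4) * (p j)^2 * Real.sqrt b :=
        mul_le_mul_of_nonneg_right
          (mul_le_mul_of_nonneg_right (hv_ub j) (sq_nonneg _)) hsb0
      have s3 : v j * (q j)^2 * p j ≤ v j * (q j)^2 * Real.sqrt a :=
        mul_le_mul_of_nonneg_left (hp_ub j) (mul_nonneg (hv0 j) (sq_nonneg _))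
      have s4 : v j * (q j)^2 * Real.sqrt a ≤ Real.sqrt (5*μ/4) * (q j)^2 * Real.sqrt a :=
        mul_le_mul_of_nonneg_right
          (mul_le_mul_of_nonneg_right (hv_ub j) (sq_nonneg _)) hsa0
      have e2 : Real.sqrt (5*μ/4) * ((p j)^2 * Real.sqrt b)
          = Real.sqrt (5*μ/4) * (p j)^2 * Real.sqrt b := by ring
      have e3 : Real.sqrt (5*μ/4) * (Real.sqrt a * (q j)^2)
          = Real.sqrt (5*μ/4) * (q j)^2 * Real.sqrt a := by ring
      linarith
    calc ∑ j, v j * w j * (p j * q j)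
        ≤ ∑ j, (Real.sqrt (5*μ/4) * ((p j)^2 * Real.sqrt b)
            + Real.sqrt (5*μ/4) * (Real.sqrt a * (q j)^2)) := Finset.sum_le_sum h1
      _ = Real.sqrt (5*μ/4) * ((∑ j, (p j)^2) * Real.sqrt b)
            + Real.sqrt (5*μ/4) * (Real.sqrt a * (∑ j, (q j)^2)) := by
          rw [Finset.sum_add_distrib, ← Finset.mul_sum, ← Finset.mul_sum,
            ← Finset.sum_mul, ← Finset.mul_sum]
      _ = Real.sqrt (5*μ/4) * (a * Real.sqrt b + b * Real.sqrt a) := by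
          rw [← hadef, ← hbdef]; ring
  have hn32 : (n:ℝ)^((3:ℝ)/2) = (n:ℝ) * Real.sqrt n := by
    rw [show ((3:ℝ)/2) = 1 + 1/2 by norm_num, Real.rpow_add hn0, Real.rpow_one,
      ← Real.sqrt_eq_rpow]
  have hd3_ub : d3 ≤ 64 * (n:ℝ)^((3:ℝ)/2) * μ^2 := by
    rw [hn32, hd3eq]
    have hE : 32 * ∑ j, v j * w j * (p j * q j)
        ≤ 32 * (Real.sqrt (5*μ/4) * (a * Real.sqrt b + b * Real.sqrt a)) := by
      linarith
    refine hE.trans ?_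
    have hkey := aux_d3 μ a b (n:ℝ) (Real.sqrt a) (Real.sqrt b)
      (Real.sqrt (5*μ/4)) (Real.sqrt n) hμpos ha0 hb0 hnR
      (Real.sq_sqrt ha0) (Real.sq_sqrt hb0)
      (Real.sq_sqrt (by positivity)) (Real.sq_sqrt hn0.le) hab_ub
    have hR0 : (0:ℝ) ≤ 64 * ((n:ℝ) * Real.sqrt n) * μ^2 := by positivity
    have := le_of_pow_le_pow_left₀ two_ne_zero hR0 hkey
    linarith
  exact ⟨hd1_ub, hd2_ub, hd3_ub, hd4_ub⟩
end

section
/- Let u ∈ ℝ^n satisfy ∑_{j=1}^n u_j = n and u_j ≥ 1/2 for all j. Then for every j: u_j ≤ (n+1)/2; moreover 0 ≤ δ(u) ≤ ln((n+1)/2), and if n ≥ 3 then Δ12(u) ≤ n·ln²((n+1)/2). -/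
theorem stmt_16 (n : ℕ) (hn : 1 ≤ n) (u : Fin n → ℝ)
    (hsum : ∑ j, u j = (n : ℝ)) (hlb : ∀ j, 1 / 2 ≤ u j) :
    (∀ j, u j ≤ ((n : ℝ) + 1) / 2) ∧
    (0 ≤ entropyDelta n u ∧ entropyDelta n u ≤ Real.log (((n : ℝ) + 1) / 2)) ∧
    (3 ≤ n → Delta12 n u ≤ n * Real.log (((n : ℝ) + 1) / 2) ^ 2) := by
  have hnpos : (0 : ℝ) < n := by exact_mod_cast hn
  have hpos : ∀ j, 0 < u j := fun j => lt_of_lt_of_le (by norm_num) (hlb j)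
  set L := Real.log (((n : ℝ) + 1) / 2) with hL
  -- upper bound on each u j
  have hub : ∀ j, u j ≤ ((n : ℝ) + 1) / 2 := by
    intro j
    have h2 : u j + ∑ k ∈ Finset.univ.erase j, u k = (n : ℝ) := by
      rw [Finset.add_sum_erase _ _ (Finset.mem_univ j)]; exact hsum
    have h1 : ((n : ℝ) - 1) / 2 ≤ ∑ k ∈ Finset.univ.erase j, u k := by
      have hcard : (Finset.univ.erase j).card = n - 1 := by
        simp [Finset.card_erase_of_mem]
      have := Finset.sum_le_sum (fun k (_ : k ∈ Finset.univ.erase j) => hlb k)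
      have hsum' : ∑ _k ∈ Finset.univ.erase j, (1 / 2 : ℝ) = ((n : ℝ) - 1) / 2 := by
        rw [Finset.sum_const, hcard, nsmul_eq_mul, Nat.cast_sub hn]
        ring
      linarith [hsum' ▸ this]
    linarith
  -- pointwise log bound
  have hlogub : ∀ j, Real.log (u j) ≤ L := fun j =>
    Real.log_le_log (hpos j) (hub j)
  -- x - 1 ≤ x log x
  have hkey : ∀ j, u j - 1 ≤ u j * Real.log (u j) := by
    intro j
    have h := Real.log_le_sub_one_of_pos (x := 1 / u j) (one_div_pos.mpr (hpos j))
    rw [Real.log_div one_ne_zero (ne_of_gt (hpos j)), Real.log_one] at h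
    have hu := hpos j
    have : 1 - 1 / u j ≤ Real.log (u j) := by linarith
    calc u j - 1 = u j * (1 - 1 / u j) := by field_simp
      _ ≤ u j * Real.log (u j) := by
          exact mul_le_mul_of_nonneg_left this (le_of_lt hu)
  have hS0 : (0 : ℝ) ≤ ∑ j, u j * Real.log (u j) := by
    have := Finset.sum_le_sum (fun j (_ : j ∈ Finset.univ) => hkey j)
    have h1 : ∑ j, (u j - 1) = (0 : ℝ) := by
      rw [Finset.sum_sub_distrib, hsum]; simp
    linarith [h1 ▸ this]
  have hSub : ∑ j, u j * Real.log (u j) ≤ (n : ℝ) * L := by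
    calc ∑ j, u j * Real.log (u j) ≤ ∑ j, u j * L :=
          Finset.sum_le_sum (fun j _ =>
            mul_le_mul_of_nonneg_left (hlogub j) (le_of_lt (hpos j)))
      _ = (n : ℝ) * L := by rw [← Finset.sum_mul, hsum]
  refine ⟨hub, ⟨?_, ?_⟩, ?_⟩
  · unfold entropyDelta; positivity
  · unfold entropyDelta
    rw [div_mul_eq_mul_div, one_mul, div_le_iff₀ hnpos, mul_comm]
    exact hSub
  · intro hn3
    have hn3' : (3 : ℝ) ≤ n := by exact_mod_cast hn3
    have hL2 : Real.log 2 ≤ L := by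
      apply Real.log_le_log (by norm_num)
      linarith
    have hsq : ∀ j, Real.log (u j) ^ 2 ≤ L ^ 2 := by
      intro j
      apply sq_le_sq'
      · have : Real.log (1 / 2) ≤ Real.log (u j) :=
          Real.log_le_log (by norm_num) (hlb j)
        rw [Real.log_div one_ne_zero two_ne_zero, Real.log_one] at this
        linarith
      · exact hlogub j
    unfold Delta12
    calc ∑ j, u j * Real.log (u j) ^ 2 ≤ ∑ j, u j * L ^ 2 :=
          Finset.sum_le_sum (fun j _ =>
            mul_le_mul_of_nonneg_left (hsq j) (le_of_lt (hpos j)))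
      _ = (n : ℝ) * L ^ 2 := by rw [← Finset.sum_mul, hsum]
end

section
/- Assume u_j ≥ 1/2 for all j. Define the two-valued entropy direction w ∈ ℝ^n by w_j := −v_j if u_j > 3/4, and w_j := −v_j + ((δ − ln(u_j))/(δ + ln 2))·v_j if 1/2 ≤ u_j ≤ 3/4. Then ‖w‖₂² ≤ ∑_{j=1}^n x_j s_j = n·μ. -/
theorem stmt_17 (n : ℕ) (hn : 1 ≤ n) (x s : Fin n → ℝ)
    (hx : ∀ j, 0 < x j) (hs : ∀ j, 0 < s j)
    (μ : ℝ) (hμ : μ = (∑ j, x j * s j) / n)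
    (v u : Fin n → ℝ)
    (hv : ∀ j, v j = Real.sqrt (x j * s j))
    (hu : ∀ j, u j = x j * s j / μ)
    (hlb : ∀ j, 1 / 2 ≤ u j)
    (δ : ℝ) (hδ : δ = (1 / (n : ℝ)) * ∑ j, u j * Real.log (u j))
    (w : Fin n → ℝ)
    (hw : ∀ j, w j = if 3 / 4 < u j then -v j
      else -v j + ((δ - Real.log (u j)) / (δ + Real.log 2)) * v j) :
    ∑ j, w j ^ 2 ≤ ∑ j, x j * s j ∧ ∑ j, x j * s j = n * μ := by
  have hxs : ∀ j, 0 < x j * s j := fun j => mul_pos (hx j) (hs j)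
  have hnpos : (0:ℝ) < n := by exact_mod_cast hn
  have hsumpos : 0 < ∑ j, x j * s j :=
    Finset.sum_pos (fun j _ => hxs j) ⟨⟨0, hn⟩, Finset.mem_univ _⟩
  have hμpos : 0 < μ := by rw [hμ]; positivity
  have hsum_eq : ∑ j, x j * s j = n * μ := by
    rw [hμ]; field_simp
  have hupos : ∀ j, 0 < u j := fun j => lt_of_lt_of_le (by norm_num) (hlb j)
  have hsumu : ∑ j, u j = n := by
    simp only [hu]
    rw [← Finset.sum_div, hsum_eq]
    field_simp
  have hδ0 : 0 ≤ δ := by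
    rw [hδ]
    have h1 : ∀ j : Fin n, u j - 1 ≤ u j * Real.log (u j) := by
      intro j
      have := Real.log_le_sub_one_of_pos (x := (u j)⁻¹) (inv_pos.mpr (hupos j))
      rw [Real.log_inv] at this
      have h2 : (u j)⁻¹ * u j = 1 := inv_mul_cancel₀ (hupos j).ne'
      nlinarith [hupos j]
    have h3 : (0:ℝ) ≤ ∑ j, u j * Real.log (u j) := by
      have h4 := Finset.sum_le_sum (fun j (_ : j ∈ Finset.univ) => h1 j)
      have h2 : ∑ j : Fin n, (u j - 1) = 0 := by
        rw [Finset.sum_sub_distrib, hsumu]; simp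
      linarith
    positivity
  have hlog2 : 0 < Real.log 2 := Real.log_pos (by norm_num)
  have key : ∀ j, w j ^ 2 ≤ x j * s j := by
    intro j
    have hv2 : v j ^ 2 = x j * s j := by
      rw [hv]; exact Real.sq_sqrt (hxs j).le
    rw [hw]
    split_ifs with h
    · rw [neg_pow]; simp [hv2]
    · push_neg at h
      set t := (δ - Real.log (u j)) / (δ + Real.log 2) with ht
      have hlogu_le : Real.log (u j) ≤ 0 := Real.log_nonpos (hupos j).le (by linarith)
      have hlogu_ge : -Real.log 2 ≤ Real.log (u j) := by
        have h5 : Real.log (1/2) ≤ Real.log (u j) := by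
          apply Real.log_le_log (by norm_num) (hlb j)
        rwa [one_div, Real.log_inv] at h5
      have ht0 : 0 ≤ t := div_nonneg (by linarith) (by linarith)
      have ht1 : t ≤ 1 := by
        rw [div_le_one (by linarith)]; linarith
      have heq : -v j + t * v j = (t - 1) * v j := by ring
      rw [heq]
      have h6 : ((t-1)*v j)^2 = (t-1)^2 * (v j)^2 := by ring
      have h7 : (t-1)^2 ≤ 1 := by nlinarith
      rw [h6, hv2]
      nlinarith [hxs j]
  exact ⟨Finset.sum_le_sum (fun j _ => key j), hsum_eq⟩
end

section
/- Assume u_j ≥ 1/2 for all j. Define the two-valued entropy direction w ∈ ℝ^n by w_j := −v_j if u_j > 3/4, and w_j := −v_j + ((δ − ln(u_j))/(δ + ln 2))·v_j if 1/2 ≤ u_j ≤ 3/4. Let L ⊆ ℝ^n be a linear subspace, p the orthogonal projection of w onto L, q := w − p, and for α ∈ [0,1] define x(α)_j := x_j + α√(x_j/s_j)·p_j and s(α)_j := s_j + α√(s_j/x_j)·q_j. Then ∑_{j=1}^n x(α)_j s(α)_j ≤ (1 − α/4)·∑_{j=1}^n x_j s_j. -/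
lemma sqrt_helper (a b : ℝ) (ha : 0 < a) (hb : 0 < b) :
    a * Real.sqrt (b / a) = Real.sqrt (a * b) := by
  nth_rewrite 1 [show a = Real.sqrt (a ^ 2) from (Real.sqrt_sq ha.le).symm]
  rw [← Real.sqrt_mul (sq_nonneg a)]
  congr 1
  field_simp

theorem stmt_18 (n : ℕ) (hn : 1 ≤ n) (x s : Fin n → ℝ)
    (hx : ∀ j, 0 < x j) (hs : ∀ j, 0 < s j)
    (μ : ℝ) (hμ : μ = (∑ j, x j * s j) / n)
    (v u : Fin n → ℝ)
    (hv : ∀ j, v j = Real.sqrt (x j * s j))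
    (hu : ∀ j, u j = x j * s j / μ)
    (hlb : ∀ j, 1 / 2 ≤ u j)
    (δ : ℝ) (hδ : δ = (1 / (n : ℝ)) * ∑ j, u j * Real.log (u j))
    (w : Fin n → ℝ)
    (hw : ∀ j, w j = if 3 / 4 < u j then -v j
      else -v j + ((δ - Real.log (u j)) / (δ + Real.log 2)) * v j)
    (L : Submodule ℝ (Fin n → ℝ)) (p q : Fin n → ℝ)
    (hpL : p ∈ L) (hperp : ∀ y ∈ L, ∑ j, (w j - p j) * y j = 0)
    (hq : ∀ j, q j = w j - p j)
    (α : ℝ) (hα0 : 0 ≤ α) (hα1 : α ≤ 1)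
    (xα sα : Fin n → ℝ)
    (hxα : ∀ j, xα j = x j + α * Real.sqrt (x j / s j) * p j)
    (hsα : ∀ j, sα j = s j + α * Real.sqrt (s j / x j) * q j) :
    ∑ j, xα j * sα j ≤ (1 - α / 4) * ∑ j, x j * s j := by
  have hnpos : (0:ℝ) < n := by exact_mod_cast hn
  have hxs : ∀ j, 0 < x j * s j := fun j => mul_pos (hx j) (hs j)
  have hsum_pos : 0 < ∑ j, x j * s j :=
    Finset.sum_pos (fun j _ => hxs j) (Finset.univ_nonempty_iff.2 ⟨⟨0, hn⟩⟩)
  have hμpos : 0 < μ := hμ ▸ div_pos hsum_pos hnpos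
  have hsum : ∑ j, x j * s j = n * μ := by rw [hμ]; field_simp
  have hupos : ∀ j, 0 < u j := fun j => lt_of_lt_of_le (by norm_num) (hlb j)
  have husum : ∑ j, u j = n := by
    calc ∑ j, u j = (∑ j, x j * s j) / μ := by
          rw [Finset.sum_div]; exact Finset.sum_congr rfl fun j _ => hu j
      _ = n := by rw [hsum]; field_simp
  -- δ ≥ 0
  have hδ0 : 0 ≤ δ := by
    have key : ∀ j : Fin n, u j - 1 ≤ u j * Real.log (u j) := by
      intro j
      have hup := hupos j
      have h : Real.log (1 / u j) ≤ 1 / u j - 1 :=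
        Real.log_le_sub_one_of_pos (by positivity)
      rw [one_div, Real.log_inv] at h
      have h2 : u j * (-Real.log (u j)) ≤ u j * ((u j)⁻¹ - 1) :=
        mul_le_mul_of_nonneg_left h hup.le
      have h3 : u j * ((u j)⁻¹ - 1) = 1 - u j := by field_simp
      nlinarith
    have h4 : ∑ j : Fin n, (u j - 1) ≤ ∑ j, u j * Real.log (u j) :=
      Finset.sum_le_sum (fun j _ => key j)
    have h5 : ∑ j : Fin n, (u j - 1) = 0 := by
      rw [Finset.sum_sub_distrib, husum, Finset.sum_const, Finset.card_univ,
        Fintype.card_fin]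
      simp
    rw [hδ]
    have h6 : 0 ≤ ∑ j, u j * Real.log (u j) := by linarith [h5 ▸ h4]
    positivity
  have hln2 : (0:ℝ) < Real.log 2 := Real.log_pos (by norm_num)
  -- pointwise key inequality
  have hkey : ∀ j, v j * w j ≤ 3 / 4 * μ - x j * s j := by
    intro j
    have hv2 : v j * v j = x j * s j := by
      rw [hv]; exact Real.mul_self_sqrt (hxs j).le
    have hxsu : x j * s j = μ * u j := by
      rw [hu]; field_simp
    rw [hw]
    by_cases hc : 3 / 4 < u j
    · simp only [if_pos hc]
      nlinarith
    · simp only [if_neg hc]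
      push_neg at hc
      have hden : 0 < δ + Real.log 2 := by linarith
      have hlogub : Real.log (u j) ≤ 0 := Real.log_nonpos (hupos j).le (by linarith)
      have hloglb : -Real.log 2 ≤ Real.log (u j) := by
        have h7 : Real.log (1 / 2 : ℝ) ≤ Real.log (u j) := by
          apply Real.log_le_log (by norm_num) (hlb j)
        rw [one_div, Real.log_inv] at h7
        exact h7
      have hc1 : (δ - Real.log (u j)) / (δ + Real.log 2) ≤ 1 := by
        rw [div_le_one hden]; linarith
      have hc0 : 0 ≤ (δ - Real.log (u j)) / (δ + Real.log 2) := by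
        apply div_nonneg <;> linarith
      have hxsle : x j * s j ≤ 3 / 4 * μ := by rw [hxsu]; nlinarith
      nlinarith [mul_le_mul_of_nonneg_right hc1 (hxs j).le,
        mul_le_mul_of_nonneg_left hxsle hc0]
  -- orthogonality
  have hpq : ∑ j, p j * q j = 0 := by
    have h8 := hperp p hpL
    calc ∑ j, p j * q j = ∑ j, (w j - p j) * p j := by
          refine Finset.sum_congr rfl fun j _ => ?_; rw [hq]; ring
      _ = 0 := h8
  have hpqw : ∀ j, p j + q j = w j := fun j => by rw [hq]; ring
  -- expand the product
  have hterm : ∀ j, xα j * sα j =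
      x j * s j + α * (v j * w j) + α ^ 2 * (p j * q j) := by
    intro j
    have e1 : x j * Real.sqrt (s j / x j) = v j := by
      rw [hv]; exact sqrt_helper _ _ (hx j) (hs j)
    have e2 : s j * Real.sqrt (x j / s j) = v j := by
      rw [hv, sqrt_helper _ _ (hs j) (hx j), mul_comm]
    have e3 : Real.sqrt (x j / s j) * Real.sqrt (s j / x j) = 1 := by
      rw [← Real.sqrt_mul (div_pos (hx j) (hs j)).le, div_mul_div_comm,
        mul_comm (s j) (x j), div_self (mul_pos (hx j) (hs j)).ne']
      exact Real.sqrt_one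
    calc xα j * sα j
        = x j * s j + α * (x j * Real.sqrt (s j / x j)) * q j
          + α * (s j * Real.sqrt (x j / s j)) * p j
          + α ^ 2 * (Real.sqrt (x j / s j) * Real.sqrt (s j / x j)) * (p j * q j) := by
            rw [hxα, hsα]; ring
      _ = x j * s j + α * (v j * (p j + q j)) + α ^ 2 * (p j * q j) := by
            rw [e1, e2, e3]; ring
      _ = x j * s j + α * (v j * w j) + α ^ 2 * (p j * q j) := by rw [hpqw j]
  have hsum_eq : ∑ j, xα j * sα j =
      (∑ j, x j * s j) + α * (∑ j, v j * w j) + α ^ 2 * (∑ j, p j * q j) := by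
    rw [Finset.mul_sum, Finset.mul_sum, ← Finset.sum_add_distrib,
      ← Finset.sum_add_distrib]
    exact Finset.sum_congr rfl fun j _ => hterm j
  have hvw : ∑ j, v j * w j ≤ -(1 / 4) * ∑ j, x j * s j := by
    have h9 : ∑ j : Fin n, (v j * w j) ≤ ∑ j : Fin n, (3 / 4 * μ - x j * s j) :=
      Finset.sum_le_sum (fun j _ => hkey j)
    rw [Finset.sum_sub_distrib, Finset.sum_const, Finset.card_univ,
      Fintype.card_fin, nsmul_eq_mul] at h9
    rw [hsum]
    rw [hsum] at h9
    linarith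
  rw [hsum_eq, hpq]
  nlinarith [mul_le_mul_of_nonneg_left hvw hα0]
end
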